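/- arXiv:2110.14600 — 7 statements merged into one kernel-verified Lean document; each statement's English description precedes it below -/
import Mathlib

section
/- Fix a finite set J, an element i ∈ J, and nonnegative integers (I_{ji})_{j∈J} with I_{ii} = 0. Let R be the Laurent polynomial ring over ℂ in the variables Y_{j,n} (j ∈ J, n ∈ ℤ). For n ∈ ℤ let A_{i,n} = Y_{i,n+1} Y_{i,n−1} ∏_{j≠i} Y_{j,n}^{−I_{ji}} (an invertible monomial in R). Let M_i be the quotient of the free R-module with basis (e_n)_{n∈ℤ} by the R-submodule generated by all elements e_{n+1} − A_{i,n} e_{n−1} (n ∈ ℤ), and let S_i^−: R → M_i be the unique ℂ-linear derivation with S_i^−(Y_{j,n}) = δ_{ij} Y_{i,n} ē_n for all j ∈ J, n ∈ ℤ (where ē_n is the class of e_n). Then the kernel of S_i^− equals the ℂ-subalgebra of R generated by the elements Y_{j,n}^{±1} for j ∈ J∖{i}, n ∈ ℤ, together with the elements Y_{i,n}(1 + A_{i,n+1}^{−1}) for n ∈ ℤ. -/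
/-- Exponent lattice of the Laurent polynomial ring in the variables `Y_{j,n}`,
`j ∈ J`, `n ∈ ℤ`: the free abelian group on `J × ℤ`. -/
abbrev LExp (J : Type) : Type := (J × ℤ) →₀ ℤ

/-- The Laurent polynomial ring over `ℂ` in the variables `Y_{j,n}`, `j ∈ J`, `n ∈ ℤ`. -/
abbrev LRing (J : Type) : Type := AddMonoidAlgebra ℂ (LExp J)

/-- The (invertible) monomial with exponent vector `v`. -/
noncomputable def Ym {J : Type} (v : LExp J) : LRing J := AddMonoidAlgebra.single v 1

/-- The exponent vector of `Y_{j,n}^k`. -/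
noncomputable def E {J : Type} (j : J) (n k : ℤ) : LExp J := Finsupp.single (j, n) k

/-- The exponent vector of the monomial
`A_{i,n} = Y_{i,n+1} Y_{i,n−1} ∏_{j≠i} Y_{j,n}^{−I_{ji}}` (here `c j = I_{ji}`). -/
noncomputable def Aexp {J : Type} [Fintype J] [DecidableEq J] (c : J → ℕ) (i : J) (n : ℤ) :
    LExp J :=
  E i (n + 1) 1 + E i (n - 1) 1 - ∑ j ∈ Finset.univ.erase i, E j n (c j : ℤ)

/-- The submodule of relations `e_{n+1} − A_n · e_{n−1}` in the free `R`-module with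
basis `(e_n)_{n ∈ ℤ}`, for a family of monomial exponents `Av : ℤ → LExp J`. -/
noncomputable def scrRel {J : Type} (Av : ℤ → LExp J) :
    Submodule (LRing J) (ℤ →₀ LRing J) :=
  Submodule.span (LRing J)
    {x | ∃ n : ℤ, x =
      Finsupp.single (n + 1) (1 : LRing J) - Ym (Av n) • Finsupp.single (n - 1) (1 : LRing J)}

/-- The target module `M` of the screening operator: the quotient of the free module with
basis `(e_n)_{n ∈ ℤ}` by the relations `e_{n+1} = A_n e_{n−1}`. -/
noncomputable abbrev ScrMod {J : Type} (Av : ℤ → LExp J) : Type :=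
  (ℤ →₀ LRing J) ⧸ scrRel Av

/-- The class `ē_n` of the basis vector `e_n` in the quotient module. -/
noncomputable def ebar {J : Type} (Av : ℤ → LExp J) (n : ℤ) : ScrMod Av :=
  Submodule.Quotient.mk (Finsupp.single n (1 : LRing J))

/-! `S x` is computed through the Euler operators `Y_{i,n} ∂/∂Y_{i,n}`: on monomials
`S (Y^v) = Y^v ∑ₙ v (i, n) ē_n`. Choosing `f` with `f (n + 2) = f n + A_{i,n+1}`, the assignments
`ē_n ↦ [n ≡ N (mod 2)] Y^{f n}` respect the relations and give two `R`-linear coordinates of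
`M_i`, so `S x = 0` yields two linear equations in the Euler derivatives of `x`.

We induct on the window `[a, N]` of indices `n` for which `Y_{i,n}` occurs in `x`. Multiplied by
`Y^{-f N}`, the equation of the parity of `N` balances `Y_{i,N} ∂x/∂Y_{i,N}` against operators
lowering the `Y_{i,N}`-degree, so `x` has no positive `Y_{i,N}`-degree. Since
`t = Y_{i,N-2}(1 + A_{i,N-1}^{-1}) = Y_{i,N-2} + Y^σ Y_{i,N}^{-1}` with `σ` free of the `Y_{i,m}`,
`x` is then a polynomial in `t` with coefficients in the window `[a, N - 1]`. As `S t = 0` and `t`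
is transcendental over the elements not involving `Y_{i,N}`, the coefficients lie in the kernel
again. In a window of width two the two coordinate equations force every Euler derivative to
vanish, so `x` only involves the `Y_{j,n}^{±1}` with `j ≠ i`. -/

open Polynomial in
theorem Transcendental.eq_zero_of_sum_mul_pow_eq_zero {A R : Type*} [CommRing A] [CommRing R]
    [Algebra A R] {t : R} (ht : Transcendental A t) {d : ℕ} {c : ℕ → A}
    (h : ∑ l ∈ Finset.range d, algebraMap A R (c l) * t ^ l = 0) {l : ℕ} (hl : l < d) :
    c l = 0 := by
  have hp := transcendental_iff.mp ht (∑ l ∈ Finset.range d, monomial l (c l))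
    (by simpa only [map_sum, aeval_monomial] using h)
  simpa [finsetSum_coeff, coeff_monomial, hl] using congrArg (coeff · l) hp

theorem exists_forall_add_one_eq {G : Type*} [AddCommGroup G] (b : ℤ → G) :
    ∃ g : ℤ → G, ∀ m, g (m + 1) = g m + b m := by
  refine ⟨fun m => ∑ k ∈ Finset.Ico 0 m, b k - ∑ k ∈ Finset.Ico m 0, b k, fun m => ?_⟩
  dsimp only
  rcases le_or_gt 0 m with hm | hm
  · rw [← Finset.sum_Ico_add_eq_sum_Ico_add_one hm,
      Finset.Ico_eq_empty_of_le (a := m + 1) (by omega), Finset.Ico_eq_empty_of_le (a := m) hm]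
    abel
  · rw [← Finset.insert_Ico_add_one_left_eq_Ico hm, Finset.sum_insert (by simp),
      Finset.Ico_eq_empty_of_le (b := m + 1) (by omega),
      Finset.Ico_eq_empty_of_le (b := m) hm.le]
    abel

theorem exists_forall_add_two_eq {G : Type*} [AddCommGroup G] (a : ℤ → G) :
    ∃ f : ℤ → G, ∀ n, f (n + 2) = f n + a n := by
  choose g hg using fun r : ℤ => exists_forall_add_one_eq fun m => a (2 * m + r)
  refine ⟨fun n => g (n % 2) (n / 2), fun n => ?_⟩
  simp only [show (n + 2) % 2 = n % 2 by omega, show (n + 2) / 2 = n / 2 + 1 by omega, hg]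
  rw [Int.mul_ediv_add_emod]

theorem Int.exists_eq_add_two_mul_of_even_sub {n n' : ℤ} (h : Even (n' - n)) (hle : n ≤ n') :
    ∃ m : ℕ, n' = n + 2 * m := by
  obtain ⟨r, hr⟩ := h
  exact ⟨r.toNat, by omega⟩

namespace ScreeningKernel

open AddMonoidAlgebra

variable {J : Type}

theorem Ym_add (v w : LExp J) : Ym (v + w) = Ym v * Ym w := by
  simp [Ym, single_mul_single]

theorem Ym_zero : Ym (0 : LExp J) = 1 := rfl

theorem Ym_mul_Ym_neg (v : LExp J) : Ym v * Ym (-v) = 1 := by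
  rw [← Ym_add, add_neg_cancel, Ym_zero]

theorem isUnit_Ym (v : LExp J) : IsUnit (Ym v) :=
  isUnit_iff_exists_inv.mpr ⟨_, Ym_mul_Ym_neg v⟩

theorem Ym_nsmul (m : ℕ) (v : LExp J) : Ym (m • v) = Ym v ^ m := by
  induction m with
  | zero => simp [Ym_zero]
  | succ m ih => rw [succ_nsmul, Ym_add, ih, pow_succ]

theorem single_eq_smul_Ym (v : LExp J) (a : ℂ) : single v a = a • Ym v := by
  rw [Ym, smul_single', mul_one]

theorem coeff_mul_Ym (x : LRing J) (w u : LExp J) : (x * Ym w).coeff u = x.coeff (u - w) := by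
  rw [Ym, coeff_mul_single_apply, mul_one, sub_eq_add_neg]

noncomputable def coeffMul (φ : LExp J → ℂ) : LRing J →ₗ[ℂ] LRing J where
  toFun x := ofCoeff (φ • x.coeff)
  map_add' x y := by ext v; simp
  map_smul' a x := by ext v; simp [mul_left_comm]

theorem coeff_coeffMul (φ : LExp J → ℂ) (x : LRing J) (v : LExp J) :
    (coeffMul φ x).coeff v = φ v * x.coeff v := rfl

theorem coeffMul_comm (φ ψ : LExp J → ℂ) (x : LRing J) :
    coeffMul φ (coeffMul ψ x) = coeffMul ψ (coeffMul φ x) := by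
  ext v
  simp [coeff_coeffMul, mul_left_comm]

theorem coeffMul_mul_Ym (φ : LExp J → ℂ) (x : LRing J) (w : LExp J) :
    coeffMul φ (x * Ym w) = coeffMul (fun v => φ (v + w)) x * Ym w := by
  ext u; simp [coeff_coeffMul, coeff_mul_Ym]

theorem coeffMul_single (φ : LExp J → ℂ) (v : LExp J) (a : ℂ) :
    coeffMul φ (single v a) = (φ v * a) • Ym v := by
  ext u
  rw [coeff_coeffMul, ← single_eq_smul_Ym]
  by_cases h : v = u
  · subst h; simp
  · simp [coeff_single, h]

theorem coeffMul_eq_smul (φ : LExp J → ℂ) (e : ℂ) {x : LRing J}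
    (h : ∀ v ∈ x.coeff.support, φ v = e) : coeffMul φ x = e • x := by
  ext v
  rw [coeff_coeffMul, coeff_smul, Finsupp.smul_apply, smul_eq_mul]
  by_cases hv : v ∈ x.coeff.support
  · rw [h v hv]
  · rw [Finsupp.notMem_support_iff.mp hv, mul_zero, mul_zero]

theorem support_coeffMul_subset (φ : LExp J → ℂ) (x : LRing J) :
    (coeffMul φ x).coeff.support ⊆ x.coeff.support := by
  intro v hv
  rw [Finsupp.mem_support_iff, coeff_coeffMul] at hv
  exact Finsupp.mem_support_iff.mpr (right_ne_zero_of_mul hv)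

variable (i : J)

noncomputable def euler (n : ℤ) : LRing J →ₗ[ℂ] LRing J :=
  coeffMul fun v => (v (i, n) : ℂ)

noncomputable def degPart (N k : ℤ) : LRing J →ₗ[ℂ] LRing J :=
  coeffMul fun v => if v (i, N) = k then 1 else 0

variable {i}

theorem coeff_euler (n : ℤ) (x : LRing J) (v : LExp J) :
    (euler i n x).coeff v = v (i, n) * x.coeff v := rfl

theorem coeff_degPart (N k : ℤ) (x : LRing J) (v : LExp J) :
    (degPart i N k x).coeff v = if v (i, N) = k then x.coeff v else 0 := by
  simp [degPart, coeff_coeffMul]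

theorem euler_Ym (n : ℤ) (v : LExp J) : euler i n (Ym v) = (v (i, n) : ℂ) • Ym v := by
  rw [euler, Ym, coeffMul_single, mul_one]
  rfl

theorem degPart_euler (N k n : ℤ) (x : LRing J) :
    degPart i N k (euler i n x) = euler i n (degPart i N k x) :=
  coeffMul_comm _ _ x

theorem euler_degPart_self (N k : ℤ) (x : LRing J) :
    euler i N (degPart i N k x) = (k : ℂ) • degPart i N k x := by
  refine coeffMul_eq_smul _ _ fun v hv => ?_
  rw [Finsupp.mem_support_iff, coeff_degPart] at hv
  simp only [ite_ne_right_iff] at hv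
  rw [hv.1]

theorem degPart_mul_Ym (N k : ℤ) (x : LRing J) (w : LExp J) :
    degPart i N k (x * Ym w) = degPart i N (k - w (i, N)) x * Ym w := by
  simp only [degPart, coeffMul_mul_Ym, Finsupp.add_apply, ← eq_sub_iff_add_eq]

theorem degPart_eq_zero {N k : ℤ} {x : LRing J} (h : ∀ v ∈ x.coeff.support, v (i, N) ≠ k) :
    degPart i N k x = 0 := by
  rw [degPart, coeffMul_eq_smul _ 0 fun v hv => if_neg (h v hv), zero_smul]

theorem sum_degPart (N : ℤ) {x : LRing J} {s : Finset ℤ}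
    (h : ∀ v ∈ x.coeff.support, v (i, N) ∈ s) : ∑ k ∈ s, degPart i N k x = x := by
  ext v
  simp only [coeff_sum, Finsupp.finsetSum_apply, coeff_degPart, Finset.sum_ite_eq]
  by_cases hv : v ∈ x.coeff.support
  · rw [if_pos (h v hv)]
  · rw [Finsupp.notMem_support_iff.mp hv, ite_self]

noncomputable def supportedAlg (H : AddSubgroup (LExp J)) : Subalgebra ℂ (LRing J) :=
  (supported ℂ ℂ (H : Set (LExp J))).toSubalgebra
    (fun v hv => by
      rw [Finset.mem_zero.mp (support_coeff_one_subset hv)]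
      exact H.zero_mem)
    (fun x y hx hy v hv => by
      classical
      obtain ⟨a, ha, b, hb, rfl⟩ := Finset.mem_add.mp (support_coeff_mul_subset x y hv)
      exact H.add_mem (hx ha) (hy hb))

theorem Ym_mem_supportedAlg {H : AddSubgroup (LExp J)} {v : LExp J} (hv : v ∈ H) :
    Ym v ∈ supportedAlg H := fun u hu => by
  rwa [Finset.mem_singleton.mp (Finsupp.support_single_subset hu)]

theorem coeffMul_mem_supportedAlg {H : AddSubgroup (LExp J)} (φ : LExp J → ℂ) {x : LRing J}
    (hx : x ∈ supportedAlg H) : coeffMul φ x ∈ supportedAlg H :=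
  fun _ hv => hx (support_coeffMul_subset φ x hv)

theorem supportedAlg_mono {H K : AddSubgroup (LExp J)} (h : H ≤ K) :
    supportedAlg H ≤ supportedAlg K :=
  fun _ hx _ hv => h (hx hv)

noncomputable def varsIn (i : J) (T : Set ℤ) : AddSubgroup (LExp J) :=
  ⨅ (n : ℤ) (_ : n ∉ T), (Finsupp.applyAddHom (i, n)).ker

theorem mem_varsIn {T : Set ℤ} {v : LExp J} : v ∈ varsIn i T ↔ ∀ n ∉ T, v (i, n) = 0 := by
  simp [varsIn, AddSubgroup.mem_iInf]

theorem varsIn_mono {T T' : Set ℤ} (h : T ⊆ T') : varsIn i T ≤ varsIn i T' :=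
  fun _ hv => mem_varsIn.mpr fun n hn => mem_varsIn.mp hv n fun hT => hn (h hT)

theorem mem_varsIn_compl_singleton {N : ℤ} {v : LExp J} : v ∈ varsIn i {N}ᶜ ↔ v (i, N) = 0 := by
  simp [mem_varsIn]

theorem E_mem_varsIn {j : J} {n : ℤ} {T : Set ℤ} (h : j = i → n ∈ T) (k : ℤ) :
    E j n k ∈ varsIn i T :=
  mem_varsIn.mpr fun m hm => Finsupp.single_eq_of_ne' fun hjn => by
    cases hjn; exact hm (h rfl)

theorem degPart_of_mem {N : ℤ} {z : LRing J} (hz : z ∈ supportedAlg (varsIn i {N}ᶜ)) (k : ℤ) :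
    degPart i N k z = if k = 0 then z else 0 := by
  rw [degPart, coeffMul_eq_smul _ (if k = 0 then 1 else 0) fun v hv => ?_]
  · split_ifs <;> simp
  · rw [mem_varsIn_compl_singleton.mp (hz hv)]
    simp [eq_comm]

theorem degPart_zero_mem (N : ℤ) (z : LRing J) : degPart i N 0 z ∈ supportedAlg (varsIn i {N}ᶜ) :=
  fun v hv => by
    have hv : v ∈ (degPart i N 0 z).coeff.support := hv
    rw [Finsupp.mem_support_iff, coeff_degPart] at hv
    exact mem_varsIn_compl_singleton.mpr (of_not_not fun h => hv (if_neg h))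

theorem Ym_E_pow (N : ℤ) (m : ℕ) : Ym (E i N (-1)) ^ m = Ym (E i N (-m)) := by
  rw [← Ym_nsmul, E, E, Finsupp.smul_single, nsmul_eq_mul, mul_neg_one]

open Polynomial in
theorem transcendental_Ym_E (N : ℤ) :
    Transcendental (supportedAlg (varsIn i {N}ᶜ)) (Ym (E i N (-1))) := by
  refine transcendental_iff.mpr fun p hp => Polynomial.ext fun l => ?_
  have hterm : ∀ l', degPart i N (-l) (p.coeff l' • Ym (E i N (-1)) ^ l') =
      if l' = l then (p.coeff l : LRing J) * Ym (E i N (-l)) else 0 := fun l' => by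
    rw [Subalgebra.smul_def, smul_eq_mul, Ym_E_pow, degPart_mul_Ym, degPart_of_mem (p.coeff l').2,
      E, Finsupp.single_eq_same]
    by_cases h : l' = l
    · subst h; simp [E, Finsupp.single_neg]
    · rw [if_neg (by omega), if_neg h, zero_mul]
  have h := congrArg (degPart i N (-l)) hp
  rw [aeval_eq_sum_range, map_sum, map_zero, Finset.sum_congr rfl fun l' _ => hterm l',
    Finset.sum_ite_eq', ite_eq_right_iff] at h
  by_cases hl : l ∈ Finset.range (p.natDegree + 1)
  · rw [(isUnit_Ym _).mul_left_eq_zero] at h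
    exact Subtype.ext (h hl)
  · exact coeff_eq_zero_of_natDegree_lt (by simpa using hl)

theorem exists_mem_supportedAlg_varsIn_Icc (x : LRing J) :
    ∃ a b : ℤ, x ∈ supportedAlg (varsIn i (Set.Icc a b)) := by
  classical
  set T := x.coeff.support.biUnion fun v => v.support.image Prod.snd
  obtain ⟨a, ha⟩ := T.bddBelow
  obtain ⟨b, hb⟩ := T.bddAbove
  refine ⟨a, b, fun v hv => mem_varsIn.mpr fun n hn => ?_⟩
  by_contra hvn
  have hnT : n ∈ T := Finset.mem_biUnion.mpr
    ⟨v, hv, Finset.mem_image.mpr ⟨(i, n), Finsupp.mem_support_iff.mpr hvn, rfl⟩⟩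
  exact hn ⟨ha hnT, hb hnT⟩

theorem euler_eq_zero_of_notMem {T : Set ℤ} {n : ℤ} {x : LRing J}
    (hx : x ∈ supportedAlg (varsIn i T)) (hn : n ∉ T) : euler i n x = 0 := by
  rw [euler, coeffMul_eq_smul _ 0 fun v hv => by rw [mem_varsIn.mp (hx hv) n hn, Int.cast_zero],
    zero_smul]

/-- Descending induction on `k`: the degree-`k` part of `hx` reads
`k • degPart k x = -∑ₙ euler n (degPart (k + 1) x) * G n`. -/
theorem degPart_eq_zero_of_pos {N : ℤ} {x : LRing J} {s : Finset ℤ} {G : ℤ → LRing J}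
    (hG : ∀ n ∈ s, ∀ k y, degPart i N k (y * G n) = degPart i N (k + 1) y * G n)
    (hx : euler i N x + ∑ n ∈ s, euler i n x * G n = 0) {k : ℤ} (hk : 0 < k) :
    degPart i N k x = 0 := by
  have hstep : ∀ k : ℤ, k ≠ 0 → degPart i N (k + 1) x = 0 → degPart i N k x = 0 := by
    intro k hk hnext
    have hsum : ∑ n ∈ s, degPart i N k (euler i n x * G n) = 0 :=
      Finset.sum_eq_zero fun n hn => by rw [hG n hn, degPart_euler, hnext, map_zero, zero_mul]
    have h := congrArg (degPart i N k) hx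
    rw [map_add, map_sum, hsum, add_zero, degPart_euler, euler_degPart_self, map_zero] at h
    exact (smul_eq_zero.mp h).resolve_left (Int.cast_ne_zero.mpr hk)
  obtain ⟨M, hM⟩ := (x.coeff.support.image fun v => v (i, N)).bddAbove
  have htop : ∀ k, M < k → degPart i N k x = 0 := fun k hk => degPart_eq_zero fun v hv hvk =>
    absurd (hM (Finset.mem_coe.mpr (Finset.mem_image_of_mem _ hv))) (by omega)
  have hdown : ∀ m : ℕ, 0 < M + 1 - m → degPart i N (M + 1 - m) x = 0 := by
    intro m
    induction m with
    | zero => intro _; exact htop _ (by omega)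
    | succ m ih =>
      intro hpos
      refine hstep _ (by omega) ?_
      rw [show M + 1 - ((m + 1 : ℕ) : ℤ) + 1 = M + 1 - m by push_cast; ring]
      exact ih (by omega)
  rcases lt_or_ge M k with h | h
  · exact htop k h
  · have h' := hdown (M + 1 - k).toNat (by omega)
    rwa [show M + 1 - ((M + 1 - k).toNat : ℤ) = k by omega] at h'

noncomputable def iPart (i : J) : LExp J →+ (ℤ →₀ ℤ) :=
  Finsupp.comapDomain.addMonoidHom (Prod.mk_right_injective i)

theorem iPart_apply (v : LExp J) (n : ℤ) : iPart i v n = v (i, n) := rfl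

/-- `v ↦ ∑ₙ v (i, n) ē_n`, which will turn out to be `Y^{-v} S (Y^v)`. -/
noncomputable def dlog (Av : ℤ → LExp J) (i : J) : LExp J →+ ScrMod Av :=
  (Finsupp.liftAddHom fun n => zmultiplesHom _ (ebar Av n)).comp (iPart i)

theorem dlog_eq_sum (Av : ℤ → LExp J) {v : LExp J} {T : Finset ℤ}
    (hT : ∀ n, v (i, n) ≠ 0 → n ∈ T) : dlog Av i v = ∑ n ∈ T, v (i, n) • ebar Av n := by
  rw [dlog, AddMonoidHom.comp_apply, Finsupp.liftAddHom_apply]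
  refine Finsupp.sum_of_support_subset _ (fun n hn => hT n ?_) _ (fun n _ => by simp)
  rwa [Finsupp.mem_support_iff, iPart_apply] at hn

variable [DecidableEq J]

theorem dlog_single (Av : ℤ → LExp J) (p : J × ℤ) :
    dlog Av i (Finsupp.single p 1) = if p.1 = i then ebar Av p.2 else 0 := by
  rw [dlog_eq_sum Av (T := {p.2}) fun n hn => ?_, Finset.sum_singleton]
  · obtain ⟨j, m⟩ := p
    by_cases hj : j = i
    · subst hj; simp
    · simp [hj]
  · by_contra h
    exact hn (Finsupp.single_eq_of_ne (by rintro rfl; simp at h))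

variable [Fintype J] {c : J → ℕ}

noncomputable def kerGen (c : J → ℕ) (i : J) (n : ℤ) : LRing J :=
  Ym (E i n 1) * (1 + Ym (-(Aexp c i (n + 1))))

noncomputable def kerGens (c : J → ℕ) (i : J) : Set (LRing J) :=
  (⋃ (j : J) (_ : j ≠ i) (n : ℤ), {Ym (E j n 1), Ym (E j n (-1))}) ∪ ⋃ n : ℤ, {kerGen c i n}

theorem kerGen_mem_adjoin (n : ℤ) : kerGen c i n ∈ Algebra.adjoin ℂ (kerGens c i) :=
  Algebra.subset_adjoin (Or.inr (Set.mem_iUnion.mpr ⟨n, rfl⟩))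

theorem Ym_single_mem_adjoin {p : J × ℤ} (hp : p.1 ≠ i) (k : ℤ) :
    Ym (Finsupp.single p k) ∈ Algebra.adjoin ℂ (kerGens c i) := by
  have hgen : ∀ e ∈ ({1, -1} : Set ℤ), Ym (Finsupp.single p e) ∈ Algebra.adjoin ℂ (kerGens c i) :=
    fun e he => Algebra.subset_adjoin (Or.inl (Set.mem_iUnion₂.mpr ⟨p.1, hp, Set.mem_iUnion.mpr
      ⟨p.2, by rcases he with rfl | rfl <;> simp [E]⟩⟩))
  induction k using Int.induction_on with
  | zero => rw [Finsupp.single_zero, Ym_zero]; exact one_mem _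
  | succ k ih => rw [Finsupp.single_add, Ym_add]; exact mul_mem ih (hgen 1 (by simp))
  | pred k ih =>
    rw [sub_eq_add_neg, Finsupp.single_add, Ym_add]; exact mul_mem ih (hgen (-1) (by simp))

theorem Ym_mem_adjoin {v : LExp J} (hv : v ∈ varsIn i ∅) :
    Ym v ∈ Algebra.adjoin ℂ (kerGens c i) := by
  have hfilter : v.filter (fun p => p.1 ≠ i) = v := by
    refine (Finsupp.filter_eq_self_iff _ _).mpr fun p hp => ?_
    rintro rfl
    exact hp (mem_varsIn.mp hv p.2 (Set.notMem_empty _))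
  have key : ∀ w : LExp J, Ym (w.filter (fun p => p.1 ≠ i)) ∈ Algebra.adjoin ℂ (kerGens c i) := by
    intro w
    induction w using Finsupp.induction_linear with
    | zero => rw [Finsupp.filter_zero, Ym_zero]; exact one_mem _
    | add w w' hw hw' => rw [Finsupp.filter_add, Ym_add]; exact mul_mem hw hw'
    | single p k =>
      by_cases hp : p.1 ≠ i
      · rw [Finsupp.filter_single_of_pos (fun q : J × ℤ => q.1 ≠ i) hp]
        exact Ym_single_mem_adjoin hp k
      · rw [Finsupp.filter_single_of_neg (fun q : J × ℤ => q.1 ≠ i) hp, Ym_zero]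
        exact one_mem _
  exact hfilter ▸ key v

theorem mem_adjoin_of_euler_eq_zero {x : LRing J} (hx : ∀ n, euler i n x = 0) :
    x ∈ Algebra.adjoin ℂ (kerGens c i) := by
  show x ∈ Subalgebra.toSubmodule (Algebra.adjoin ℂ (kerGens c i))
  refine Submodule.span_le.mpr ?_ (mem_span_support_coeff x)
  rintro _ ⟨v, hv, rfl⟩
  refine Ym_mem_adjoin (mem_varsIn.mpr fun n _ => ?_)
  have h := congrArg (fun y => y.coeff v) (hx n)
  simp only [coeff_euler, coeff_zero, Finsupp.coe_zero, Pi.zero_apply, mul_eq_zero,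
    Finsupp.mem_support_iff.mp hv, or_false, Int.cast_eq_zero] at h
  exact h

theorem sum_E_erase_mem_varsIn (m : ℤ) (T : Set ℤ) :
    ∑ j ∈ Finset.univ.erase i, E j m (c j : ℤ) ∈ varsIn i T :=
  sum_mem fun _ hj => E_mem_varsIn (fun hji => absurd hji (Finset.mem_erase.mp hj).1) _

theorem Aexp_apply_self (m s : ℤ) :
    Aexp c i m (i, s) = (if s = m + 1 then 1 else 0) + (if s = m - 1 then 1 else 0) := by
  have hsum := mem_varsIn.mp (sum_E_erase_mem_varsIn (i := i) (c := c) m ∅) s (Set.notMem_empty s)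
  rw [Aexp, Finsupp.sub_apply, Finsupp.add_apply, hsum, sub_zero]
  simp [E, Finsupp.single_apply, eq_comm]

theorem dlog_Aexp (m : ℤ) :
    dlog (Aexp c i) i (Aexp c i m) = ebar (Aexp c i) (m + 1) + ebar (Aexp c i) (m - 1) := by
  rw [dlog_eq_sum _ (T := {m + 1, m - 1}) fun n hn => ?_, Finset.sum_pair (by omega),
    Aexp_apply_self, Aexp_apply_self]
  · simp [show m + 1 ≠ m - 1 by omega, show m - 1 ≠ m + 1 by omega]
  · rw [Aexp_apply_self] at hn
    simp only [Finset.mem_insert, Finset.mem_singleton]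
    by_contra h
    simp only [not_or] at h
    simp [h.1, h.2] at hn

theorem ebar_add_two (n : ℤ) :
    ebar (Aexp c i) (n + 2) = Ym (Aexp c i (n + 1)) • ebar (Aexp c i) n := by
  rw [ebar, ebar, ← Submodule.Quotient.mk_smul, Submodule.Quotient.eq]
  refine Submodule.subset_span ⟨n + 1, ?_⟩
  rw [show n + 1 + 1 = n + 2 by ring, add_sub_cancel_right]

noncomputable def weight (f : ℤ → LExp J) (N n : ℤ) : LRing J :=
  if Even (n - N) then Ym (f n) else 0

section Coordinates

variable {f : ℤ → LExp J} (hf : ∀ n, f (n + 2) = f n + Aexp c i (n + 1))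
include hf

theorem apply_add_two_mul {n N : ℤ} (m : ℕ) (h : n + 2 * m < N) :
    f (n + 2 * m) (i, N) = f n (i, N) := by
  induction m with
  | zero => simp
  | succ m ih =>
    rw [show n + 2 * ((m + 1 : ℕ) : ℤ) = n + 2 * m + 2 by push_cast; ring, hf,
      Finsupp.add_apply, ih (by omega), Aexp_apply_self, if_neg (by omega), if_neg (by omega),
      add_zero, add_zero]

theorem apply_self (N : ℤ) : f N (i, N) = f (N - 2) (i, N) + 1 := by
  have h := hf (N - 2)
  rw [sub_add_cancel] at h
  rw [h, Finsupp.add_apply, Aexp_apply_self, if_pos (by ring), if_neg (by omega), add_zero]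

theorem weight_add_one (N n : ℤ) :
    weight f N (n + 1) = Ym (Aexp c i n) * weight f N (n - 1) := by
  have hpar : Even (n + 1 - N) ↔ Even (n - 1 - N) := by
    rw [show n + 1 - N = n - 1 - N + 2 by ring, Int.even_add, iff_true_intro even_two, iff_true]
  have h := hf (n - 1)
  rw [sub_add_cancel, show n - 1 + 2 = n + 1 by ring] at h
  by_cases hp : Even (n - 1 - N)
  · rw [weight, weight, if_pos (hpar.mpr hp), if_pos hp, h, Ym_add, mul_comm]
  · rw [weight, weight, if_neg (mt hpar.mp hp), if_neg hp, mul_zero]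

/-- `ē_n ↦ [n ≡ N (mod 2)] Y^{f n}`; the relations `ē_{n+1} = A_{i,n} ē_{n-1}` are respected
because `f (n + 1) = f (n - 1) + A_{i,n}`. -/
noncomputable def coord (N : ℤ) : ScrMod (Aexp c i) →ₗ[LRing J] LRing J :=
  (scrRel (Aexp c i)).liftQ (Finsupp.linearCombination (LRing J) (weight f N)) <| by
    rw [scrRel, Submodule.span_le]
    rintro _ ⟨n, rfl⟩
    simp [Finsupp.linearCombination_single, weight_add_one hf]

theorem coord_ebar (N n : ℤ) : coord hf N (ebar (Aexp c i) n) = weight f N n := by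
  rw [ebar, coord, Submodule.liftQ_apply, Finsupp.linearCombination_single, one_smul]

theorem coord_dlog (N : ℤ) {v : LExp J} {T : Finset ℤ} (hT : ∀ n, v (i, n) ≠ 0 → n ∈ T) :
    coord hf N (dlog (Aexp c i) i v) = ∑ n ∈ T, v (i, n) • weight f N n := by
  simp [dlog_eq_sum _ hT, coord_ebar hf]

theorem degPart_mul_weight {n N : ℤ} (hn : n < N) (k : ℤ) (y : LRing J) :
    degPart i N k (y * (weight f N n * Ym (-f N))) =
      degPart i N (k + 1) y * (weight f N n * Ym (-f N)) := by
  unfold weight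
  split_ifs with hpar
  · obtain ⟨m, hm⟩ := Int.exists_eq_add_two_mul_of_even_sub (n := n) (n' := N - 2)
      (by rw [show N - 2 - n = -(n - N) + -2 by ring]; exact hpar.neg.add (by decide)) (by
        obtain ⟨r, hr⟩ := hpar; omega)
    have hcoord : (f n + -f N) (i, N) = -1 := by
      rw [Finsupp.add_apply, Finsupp.neg_apply, apply_self hf, hm,
        apply_add_two_mul hf m (by omega)]
      ring
    rw [← Ym_add, degPart_mul_Ym, hcoord, sub_neg_eq_add]
  · rw [zero_mul, mul_zero, mul_zero, map_zero]

theorem Ym_neg_mul_weight_mem {n₀ n N N' : ℤ} (h₀ : n₀ ≤ n) (hn : n < N') (hpar : Even (n₀ - N)) :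
    Ym (-f n₀) * weight f N n ∈ supportedAlg (varsIn i {N'}ᶜ) := by
  unfold weight
  split_ifs with hnN
  · obtain ⟨m, rfl⟩ := Int.exists_eq_add_two_mul_of_even_sub
      (by rw [show n - n₀ = (n - N) - (n₀ - N) by ring]; exact hnN.sub hpar) h₀
    rw [← Ym_add]
    refine Ym_mem_supportedAlg (mem_varsIn_compl_singleton.mpr ?_)
    rw [Finsupp.add_apply, Finsupp.neg_apply, apply_add_two_mul hf m hn, neg_add_cancel]
  · rw [mul_zero]
    exact zero_mem _

end Coordinates

theorem kerGen_eq (n : ℤ) :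
    kerGen c i n = Ym (E i n 1) +
      Ym (∑ j ∈ Finset.univ.erase i, E j (n + 1) (c j : ℤ)) * Ym (E i (n + 2) (-1)) := by
  rw [kerGen, mul_add, mul_one, ← Ym_add, ← Ym_add, Aexp, show n + 1 + 1 = n + 2 by ring,
    add_sub_cancel_right, E, E, E, Finsupp.single_neg]
  congr 2
  abel

open Polynomial in
theorem transcendental_kerGen (n : ℤ) :
    Transcendental (supportedAlg (varsIn i {n + 2}ᶜ)) (kerGen c i n) := by
  set A := supportedAlg (varsIn i {n + 2}ᶜ)
  have hmem : ∀ {w : LExp J}, w ∈ varsIn i {n + 2}ᶜ → Ym w ∈ A := Ym_mem_supportedAlg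
  set σ := ∑ j ∈ Finset.univ.erase i, E j (n + 1) (c j : ℤ)
  let u : A := ⟨Ym σ, hmem (sum_E_erase_mem_varsIn _ _)⟩
  let b : A := ⟨Ym (E i n 1), hmem (E_mem_varsIn (fun _ => by simp) _)⟩
  have hu : IsUnit u := isUnit_iff_exists_inv.mpr
    ⟨⟨Ym (-σ), hmem (neg_mem (sum_E_erase_mem_varsIn _ _))⟩, Subtype.ext (Ym_mul_Ym_neg σ)⟩
  have hlin : aeval (Ym (E i (n + 2) (-1))) (C u * X + C b) = kerGen c i n := by
    rw [kerGen_eq, map_add, map_mul, aeval_C, aeval_C, aeval_X, add_comm]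
    rfl
  rw [← hlin]
  refine (transcendental_Ym_E (n + 2)).aeval _ ?_ ?_
  · rw [natDegree_linear hu.ne_zero]; exact one_ne_zero
  · rw [leadingCoeff_linear hu.ne_zero]; exact hu.mem_nonZeroDivisors

/-- `Y_{i,n+2}^{-1} = Y^{-σ} (kerGen c i n - Y_{i,n})` by `kerGen_eq`, so every component of
nonpositive `Y_{i,n+2}`-degree is a polynomial in `kerGen c i n`. -/
theorem mem_adjoin_kerGen {a n : ℤ} (han : a ≤ n) {x : LRing J}
    (hx : x ∈ supportedAlg (varsIn i (Set.Icc a (n + 2))))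
    (hpos : ∀ k, 0 < k → degPart i (n + 2) k x = 0) :
    x ∈ Algebra.adjoin (supportedAlg (varsIn i (Set.Icc a (n + 1)))) {kerGen c i n} := by
  set B := supportedAlg (varsIn i (Set.Icc a (n + 1)))
  set Adj := Algebra.adjoin B {kerGen c i n}
  have hB : ∀ z ∈ B, z ∈ Adj := fun z hz => Adj.algebraMap_mem ⟨z, hz⟩
  set σ := ∑ j ∈ Finset.univ.erase i, E j (n + 1) (c j : ℤ)
  have hy : Ym (E i (n + 2) (-1)) ∈ Adj := by
    have h : Ym (E i (n + 2) (-1)) = Ym (-σ) * (kerGen c i n - Ym (E i n 1)) := by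
      rw [kerGen_eq, add_sub_cancel_left, ← mul_assoc, ← Ym_add, neg_add_cancel, Ym_zero, one_mul]
    rw [h]
    refine mul_mem (hB _ (Ym_mem_supportedAlg (neg_mem (sum_E_erase_mem_varsIn _ _))))
      (sub_mem (Algebra.self_mem_adjoin_singleton _ _) (hB _ (Ym_mem_supportedAlg ?_)))
    exact E_mem_varsIn (T := Set.Icc a (n + 1)) (fun _ => ⟨han, by omega⟩) _
  rw [← sum_degPart (n + 2) (s := x.coeff.support.image fun v => v (i, n + 2))
    fun v hv => Finset.mem_image_of_mem _ hv]
  refine sum_mem fun k _ => ?_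
  rcases lt_or_ge 0 k with hk | hk
  · rw [hpos k hk]
    exact zero_mem _
  have hdecomp : degPart i (n + 2) k x =
      degPart i (n + 2) 0 (x * Ym (E i (n + 2) (-k))) * Ym (E i (n + 2) (-1)) ^ (-k).toNat := by
    have hpow : Ym (E i (n + 2) (-1)) ^ (-k).toNat = Ym (E i (n + 2) k) := by
      rw [Ym_E_pow, show (-(-k).toNat : ℤ) = k by omega]
    rw [hpow, degPart_mul_Ym, mul_assoc, ← Ym_add]
    simp only [E, ← Finsupp.single_add, neg_add_cancel, Finsupp.single_zero, Ym_zero, mul_one,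
      Finsupp.single_eq_same, zero_sub, neg_neg]
  rw [hdecomp]
  refine mul_mem (hB _ fun v hv => mem_varsIn.mpr fun m hm => ?_) (pow_mem hy _)
  have hxk : x * Ym (E i (n + 2) (-k)) ∈ supportedAlg (varsIn i (Set.Icc a (n + 2))) :=
    mul_mem hx (Ym_mem_supportedAlg
      (E_mem_varsIn (T := Set.Icc a (n + 2)) (fun _ => ⟨by omega, le_rfl⟩) _))
  by_cases hmN : m = n + 2
  · exact hmN ▸ mem_varsIn_compl_singleton.mp (degPart_zero_mem _ _ hv)
  · exact mem_varsIn.mp (coeffMul_mem_supportedAlg _ hxk hv) m fun h => hm ⟨h.1, by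
      have := h.2; omega⟩

section Screening

open Polynomial

variable (S : LRing J →ₗ[ℂ] ScrMod (Aexp c i))
  (hLeib : ∀ x y : LRing J, S (x * y) = x • S y + y • S x)
  (hval : ∀ (j : J) (n : ℤ),
    S (Ym (E j n 1)) = if j = i then Ym (E i n 1) • ebar (Aexp c i) n else 0)

include hLeib

theorem S_one : S 1 = 0 :=
  (Derivation.mk' S hLeib).map_one_eq_zero

theorem S_pow {t : LRing J} (ht : S t = 0) (l : ℕ) : S (t ^ l) = 0 := by
  induction l with
  | zero => rw [pow_zero, S_one S hLeib]
  | succ l ih => rw [pow_succ, hLeib, ih, ht, smul_zero, smul_zero, add_zero]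

noncomputable def logDeriv : LExp J →+ ScrMod (Aexp c i) where
  toFun v := Ym (-v) • S (Ym v)
  map_zero' := by rw [neg_zero, Ym_zero, S_one S hLeib, smul_zero]
  map_add' v w := by
    have hcancel : ∀ a b : LExp J, Ym (-(a + b)) * Ym a = Ym (-b) := fun a b => by
      rw [← Ym_add]; congr 1; abel
    simp only [Ym_add v w, hLeib, smul_add, smul_smul, hcancel]
    rw [add_comm v w, hcancel, add_comm]

include hval

theorem logDeriv_eq_dlog : logDeriv S hLeib = dlog (Aexp c i) i := by
  refine Finsupp.addHom_ext' fun p => AddMonoidHom.ext_int ?_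
  simp only [AddMonoidHom.comp_apply, Finsupp.singleAddHom_apply, dlog_single]
  obtain ⟨j, n⟩ := p
  change Ym (-E j n 1) • S (Ym (E j n 1)) = _
  rw [hval]
  split_ifs with hj
  · subst hj; rw [smul_smul, mul_comm, Ym_mul_Ym_neg, one_smul]
  · rw [smul_zero]

theorem S_Ym (v : LExp J) : S (Ym v) = Ym v • dlog (Aexp c i) i v := by
  rw [← logDeriv_eq_dlog S hLeib hval]
  change S (Ym v) = Ym v • (Ym (-v) • S (Ym v))
  rw [smul_smul, Ym_mul_Ym_neg, one_smul]

theorem S_kerGen (n : ℤ) : S (kerGen c i n) = 0 := by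
  have hdlog : dlog (Aexp c i) i (E i n 1) = ebar (Aexp c i) n := by
    rw [E, dlog_single, if_pos rfl]
  have hdlogA : dlog (Aexp c i) i (E i n 1 - Aexp c i (n + 1)) = -ebar (Aexp c i) (n + 2) := by
    rw [map_sub, dlog_Aexp, hdlog, show n + 1 + 1 = n + 2 by ring, add_sub_cancel_right]
    abel
  rw [kerGen, mul_add, mul_one, ← Ym_add, ← sub_eq_add_neg, map_add, S_Ym S hLeib hval,
    S_Ym S hLeib hval, hdlog, hdlogA, ebar_add_two, smul_neg, smul_smul, ← Ym_add, sub_add_cancel,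
    add_neg_cancel]

theorem S_eq_zero_of_mem_adjoin {x : LRing J} (hx : x ∈ Algebra.adjoin ℂ (kerGens c i)) :
    S x = 0 := by
  induction hx using Algebra.adjoin_induction with
  | mem y hy =>
    rcases hy with hy | hy
    · obtain ⟨j, hj, n, hy⟩ := by simpa only [Set.mem_iUnion] using hy
      have hdlog : ∀ k, dlog (Aexp c i) i (E j n k) = 0 := fun k =>
        (dlog_eq_sum _ (T := ∅) fun m hm => (hm (Finsupp.single_eq_of_ne' (by
          rintro ⟨⟩; exact hj rfl))).elim).trans Finset.sum_empty
      rcases hy with rfl | rfl <;> rw [S_Ym S hLeib hval, hdlog, smul_zero]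
    · obtain ⟨n, rfl⟩ := Set.mem_iUnion.mp hy
      exact S_kerGen S hLeib hval n
  | algebraMap r => rw [Algebra.algebraMap_eq_smul_one, map_smul, S_one S hLeib, smul_zero]
  | add y z _ _ hy hz => rw [map_add, hy, hz, add_zero]
  | mul y z _ _ hy hz => rw [hLeib, hy, hz, smul_zero, smul_zero, add_zero]

variable {f : ℤ → LExp J} (hf : ∀ n, f (n + 2) = f n + Aexp c i (n + 1))

theorem coord_S_single (N : ℤ) {T : Finset ℤ} {v : LExp J} (hv : v ∈ varsIn i T) (a : ℂ) :
    coord hf N (S (single v a)) = ∑ n ∈ T, euler i n (single v a) * weight f N n := by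
  have hT : ∀ n, v (i, n) ≠ 0 → n ∈ T := fun n hn => by
    by_contra h; exact hn (mem_varsIn.mp hv n h)
  simp only [single_eq_smul_Ym, map_smul, S_Ym S hLeib hval, LinearMap.map_smul_of_tower,
    coord_dlog hf N hT, euler_Ym, Finset.smul_sum, smul_mul_assoc]
  refine Finset.sum_congr rfl fun n _ => ?_
  rw [smul_comm, ← Int.cast_smul_eq_zsmul ℂ, smul_eq_mul, mul_smul_comm, mul_smul_comm]

theorem coord_S (N : ℤ) {T : Finset ℤ} {x : LRing J} (hx : x ∈ supportedAlg (varsIn i T)) :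
    coord hf N (S x) = ∑ n ∈ T, euler i n x * weight f N n := by
  conv_lhs => rw [← sum_coeff_single x]
  conv_rhs => rw [← sum_coeff_single x]
  simp only [Finsupp.sum, map_sum, Finset.sum_mul]
  rw [Finset.sum_comm]
  exact Finset.sum_congr rfl fun v hv => coord_S_single S hLeib hval hf N (hx hv) _

omit hval hf in
theorem S_aeval {B : Subalgebra ℂ (LRing J)} {t : LRing J} (ht : S t = 0) (P : Polynomial B) :
    S (aeval t P) = ∑ l ∈ Finset.range (P.natDegree + 1), t ^ l • S (P.coeff l) := by
  rw [aeval_eq_sum_range, map_sum]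
  refine Finset.sum_congr rfl fun l _ => ?_
  rw [Subalgebra.smul_def, smul_eq_mul, hLeib, S_pow S hLeib ht, smul_zero, zero_add]

theorem euler_add_sum_eq_zero {a N : ℤ} (haN : a ≤ N) {x : LRing J}
    (hx : x ∈ supportedAlg (varsIn i (Set.Icc a N))) (hS : coord hf N (S x) = 0) :
    euler i N x + ∑ n ∈ Finset.Ico a N, euler i n x * (weight f N n * Ym (-f N)) = 0 := by
  have h := congrArg (· * Ym (-f N))
    ((coord_S S hLeib hval hf N (T := Finset.Icc a N) (by rwa [Finset.coe_Icc])).symm.trans hS)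
  simp only [zero_mul] at h
  rw [← Finset.Ico_insert_right haN, Finset.sum_insert Finset.right_notMem_Ico, add_mul,
    Finset.sum_mul, weight, if_pos (by simp), mul_assoc, ← Ym_add, add_neg_cancel, Ym_zero,
    mul_one] at h
  simpa only [mul_assoc] using h

/-- Since `S (kerGen c i n) = 0`, `coord N (S (aeval t P)) = ∑ₗ coord N (S (P.coeff l)) tˡ`; after
multiplication by a suitable `Y^{-f n₀}` these coefficients do not involve `Y_{i,n+2}`, over which
`t = kerGen c i n` is transcendental. -/
theorem coord_S_coeff_eq_zero {a n : ℤ}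
    (P : Polynomial (supportedAlg (varsIn i (Set.Icc a (n + 1)))))
    (hP : ∀ N, coord hf N (S (aeval (kerGen c i n) P)) = 0) (l : ℕ) (N : ℤ) :
    coord hf N (S (P.coeff l)) = 0 := by
  set A := supportedAlg (varsIn i {n + 2}ᶜ)
  obtain ⟨n₀, hn₀a, hn₀N⟩ : ∃ n₀, n₀ ≤ a ∧ Even (n₀ - N) := by
    rcases Int.even_or_odd (a - N) with h | h
    · exact ⟨a, le_rfl, h⟩
    · exact ⟨a - 1, by omega, by rw [show a - 1 - N = a - N - 1 by ring]; exact h.sub_odd odd_one⟩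
  have hmem : ∀ l, Ym (-f n₀) * coord hf N (S (P.coeff l)) ∈ A := fun l => by
    rw [coord_S S hLeib hval hf N (T := Finset.Icc a (n + 1))
      (by rw [Finset.coe_Icc]; exact (P.coeff l).2), Finset.mul_sum]
    refine sum_mem fun m hm => ?_
    rw [Finset.mem_Icc] at hm
    rw [mul_left_comm]
    refine mul_mem ?_ (Ym_neg_mul_weight_mem hf (by omega) (by omega : m < n + 2) hn₀N)
    refine supportedAlg_mono (varsIn_mono ?_) (coeffMul_mem_supportedAlg _ (P.coeff l).2)
    exact Set.subset_compl_singleton_iff.mpr fun h => absurd h.2 (by omega)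
  have hsum : ∑ l ∈ Finset.range (P.natDegree + 1),
      algebraMap A (LRing J) ⟨_, hmem l⟩ * kerGen c i n ^ l = 0 := by
    have h := congrArg (fun z : LRing J => Ym (-f n₀) * z) (hP N)
    simp only [S_aeval S hLeib (S_kerGen S hLeib hval n), map_sum, map_smul, smul_eq_mul,
      Finset.mul_sum, mul_zero] at h
    rw [← h]
    refine Finset.sum_congr rfl fun l _ => ?_
    change Ym (-f n₀) * coord hf N (S (P.coeff l)) * kerGen c i n ^ l = _
    ring
  by_cases hl : l < P.natDegree + 1
  · have h := congrArg Subtype.val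
      ((transcendental_kerGen n).eq_zero_of_sum_mul_pow_eq_zero hsum hl)
    exact ((isUnit_Ym _).mul_right_eq_zero).mp h
  · rw [coeff_eq_zero_of_natDegree_lt (by omega), ZeroMemClass.coe_zero, map_zero, map_zero]

/-- `a` and `a + 1` have different parities, so each coordinate equation involves a single
Euler derivative. -/
theorem mem_adjoin_of_mem_Icc_add_one {a : ℤ} {x : LRing J}
    (hx : x ∈ supportedAlg (varsIn i (Set.Icc a (a + 1)))) (hS : ∀ N, coord hf N (S x) = 0) :
    x ∈ Algebra.adjoin ℂ (kerGens c i) := by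
  refine mem_adjoin_of_euler_eq_zero fun n => ?_
  by_cases hn : n ∈ Set.Icc a (a + 1)
  · have h := hS n
    rw [coord_S S hLeib hval hf n (T := Finset.Icc a (a + 1)) (by rwa [Finset.coe_Icc]),
      Finset.sum_eq_single_of_mem n (Finset.mem_Icc.mpr hn) fun m hm hmn => ?_, weight,
      if_pos (by simp), (isUnit_Ym _).mul_left_eq_zero] at h
    · exact h
    · rw [Finset.mem_Icc] at hm
      rw [weight, if_neg fun ⟨r, hr⟩ => by have := hn.1; have := hn.2; omega, mul_zero]
  · exact euler_eq_zero_of_notMem hx hn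

theorem mem_adjoin_of_coord_S_eq_zero (k : ℕ) (a : ℤ) {x : LRing J}
    (hx : x ∈ supportedAlg (varsIn i (Set.Icc a (a + k + 1))))
    (hS : ∀ N, coord hf N (S x) = 0) : x ∈ Algebra.adjoin ℂ (kerGens c i) := by
  induction k generalizing x with
  | zero => exact mem_adjoin_of_mem_Icc_add_one S hLeib hval hf (by simpa using hx) hS
  | succ k ih =>
    rw [show a + ((k + 1 : ℕ) : ℤ) + 1 = a + k + 2 by push_cast; ring] at hx
    have htop := euler_add_sum_eq_zero S hLeib hval hf (by omega) hx (hS _)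
    have hpos := fun j (hj : 0 < j) =>
      degPart_eq_zero_of_pos (fun m hm => degPart_mul_weight hf (Finset.mem_Ico.mp hm).2) htop hj
    have hadj := mem_adjoin_kerGen (c := c) (by omega) hx hpos
    rw [Algebra.adjoin_singleton_eq_range_aeval] at hadj
    obtain ⟨P, rfl⟩ := hadj
    rw [AlgHom.toRingHom_eq_coe, RingHom.coe_coe, aeval_eq_sum_range]
    refine sum_mem fun l _ => ?_
    rw [Subalgebra.smul_def, smul_eq_mul]
    exact mul_mem (ih (P.coeff l).2 (coord_S_coeff_eq_zero S hLeib hval hf P hS l))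
      (pow_mem (kerGen_mem_adjoin _) _)

end Screening

end ScreeningKernel

theorem stmt3_general {J : Type} [Fintype J] [DecidableEq J] (i : J)
    (c : J → ℕ)
    (S : LRing J →ₗ[ℂ] ScrMod (Aexp c i))
    (hLeib : ∀ x y : LRing J, S (x * y) = x • S y + y • S x)
    (hval : ∀ (j : J) (n : ℤ),
      S (Ym (E j n 1)) = if j = i then Ym (E i n 1) • ebar (Aexp c i) n else 0) :
    ∀ x : LRing J, S x = 0 ↔ x ∈ Algebra.adjoin ℂ
      ((⋃ (j : J) (_ : j ≠ i) (n : ℤ), {Ym (E j n 1), Ym (E j n (-1))}) ∪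
        (⋃ n : ℤ, {Ym (E i n 1) * (1 + Ym (-(Aexp c i (n + 1))))}) : Set (LRing J)) := by
  intro x
  refine ⟨fun hx => ?_, ScreeningKernel.S_eq_zero_of_mem_adjoin S hLeib hval⟩
  obtain ⟨f, hf⟩ := exists_forall_add_two_eq fun n => Aexp c i (n + 1)
  obtain ⟨a, b, hab⟩ := ScreeningKernel.exists_mem_supportedAlg_varsIn_Icc (i := i) x
  refine ScreeningKernel.mem_adjoin_of_coord_S_eq_zero S hLeib hval hf (b - a).toNat a ?_
    fun N => by rw [hx, map_zero]
  exact ScreeningKernel.supportedAlg_mono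
    (ScreeningKernel.varsIn_mono (Set.Icc_subset_Icc_right (by omega))) hab

/-- The kernel of the screening operator `S_i^−` (a `ℂ`-linear derivation
with `S_i^−(Y_{j,n}) = δ_{ij} Y_{i,n} ē_n`) equals the `ℂ`-subalgebra of the Laurent
polynomial ring generated by the `Y_{j,n}^{±1}`, `j ≠ i`, together with the elements
`Y_{i,n}(1 + A_{i,n+1}^{−1})`. -/
theorem stmt3 {J : Type} [Fintype J] [DecidableEq J] (i : J)
    (c : J → ℕ) (hc : c i = 0)
    (S : LRing J →ₗ[ℂ] ScrMod (Aexp c i))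
    (hLeib : ∀ x y : LRing J, S (x * y) = x • S y + y • S x)
    (hval : ∀ (j : J) (n : ℤ),
      S (Ym (E j n 1)) = if j = i then Ym (E i n 1) • ebar (Aexp c i) n else 0) :
    ∀ x : LRing J, S x = 0 ↔ x ∈ Algebra.adjoin ℂ
      ((⋃ (j : J) (_ : j ≠ i) (n : ℤ), {Ym (E j n 1), Ym (E j n (-1))}) ∪
        (⋃ n : ℤ, {Ym (E i n 1) * (1 + Ym (-(Aexp c i (n + 1))))}) : Set (LRing J)) :=
  stmt3_general i c S hLeib hval
end

section
/- Let (I′, A′, σ) be a simply-laced folding datum, let I be the set of ⟨σ⟩-orbits, and let π: R′ → R be the folding homomorphism between the Laurent polynomial rings over ℂ in variables Y_{j,n} (j ∈ I′, n ∈ ℤ) and Y_{ī,n} (ī ∈ I, n ∈ ℤ), sending Y_{j,n} to Y_{[j],n}. For i ∈ I′ let S′^−_i : R′ → M′_i be the screening derivation built from the monomials A′_{i,n} = Y_{i,n+1}Y_{i,n−1}∏_{j≠i}Y_{j,n}^{A′_{ji}}, and for an orbit ī ∈ I let S^−_ī : R → M_ī be the screening derivation built from A_{ī,n} = Y_{ī,n+1}Y_{ī,n−1}∏_{j̄≠ī}Y_{j̄,n}^{c_{j̄ī}},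 where c_{j̄ī} = Σ_{j′∈j̄}A′_{j′i} for a representative i ∈ ī. Then: (a) for each orbit ī there is a well-defined additive map p_{i′}: M′_{i′} → M_ī for each i′ ∈ ī, semilinear over π and sending ē_n to ē_n, and one has the identity of derivations S^−_ī ∘ π = Σ_{i′∈ī} p_{i′} ∘ S′^−_{i′}; (b) consequently π maps ⋂_{i∈I′} Ker S′^−_i into ⋂_{ī∈I} Ker S^−_ī. -/
/-- The folding ring homomorphism `π : R′ → R`, with `π(Y_{j,n}) = Y_{cl j, n}`. -/
noncomputable def foldPi {I' I : Type} (cl : I' → I) : LRing I' →+* LRing I :=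
  AddMonoidAlgebra.mapDomainRingHom ℂ
    (Finsupp.mapDomain.addMonoidHom (Prod.map cl (id : ℤ → ℤ)))

/-- Exponent of `A′_{i,n} = Y_{i,n+1} Y_{i,n−1} ∏_{j≠i} Y_{j,n}^{A′_{ji}}`. -/
noncomputable def AexpSL {I' : Type} [Fintype I'] [DecidableEq I'] (A' : I' → I' → ℤ)
    (i : I') (n : ℤ) : LExp I' :=
  E i (n + 1) 1 + E i (n - 1) 1 + ∑ j ∈ Finset.univ.erase i, E j n (A' j i)

/-- Exponent of the folded monomial
`A_{ī,n} = Y_{ī,n+1} Y_{ī,n−1} ∏_{j̄ ≠ ī} Y_{j̄,n}^{c_{j̄ ī}}`. -/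
noncomputable def AexpF {I : Type} [Fintype I] [DecidableEq I] (c : I → I → ℤ)
    (ib : I) (n : ℤ) : LExp I :=
  E ib (n + 1) 1 + E ib (n - 1) 1 + ∑ jb ∈ Finset.univ.erase ib, E jb n (c jb ib)

section Monomials

variable {J : Type}

lemma E_add (j : J) (n a b : ℤ) : E j n (a + b) = E j n a + E j n b :=
  Finsupp.single_add _ _ _

lemma E_zero (j : J) (n : ℤ) : E j n 0 = 0 :=
  Finsupp.single_zero _

lemma Ym_zero : Ym (0 : LExp J) = 1 :=
  rfl

lemma Ym_add (v w : LExp J) : Ym (v + w) = Ym v * Ym w := by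
  simp [Ym, AddMonoidAlgebra.single_mul_single]

lemma Ym_E_one_mul_Ym_E_neg_one (j : J) (n : ℤ) : Ym (E j n 1) * Ym (E j n (-1)) = 1 := by
  rw [← Ym_add, ← E_add, add_neg_cancel, E_zero, Ym_zero]

lemma single_eq_single_zero_mul_Ym (v : LExp J) (r : ℂ) :
    (AddMonoidAlgebra.single v r : LRing J) = AddMonoidAlgebra.single 0 r * Ym v := by
  rw [Ym, AddMonoidAlgebra.single_mul_single, zero_add, mul_one]

lemma Ym_E_mem {R : Subring (LRing J)} {j : J} {n : ℤ} (h₁ : Ym (E j n 1) ∈ R)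
    (hinv : Ym (E j n (-1)) ∈ R) (k : ℤ) : Ym (E j n k) ∈ R := by
  induction k using Int.induction_on with
  | zero => rw [E_zero, Ym_zero]; exact R.one_mem
  | succ k ih => rw [E_add, Ym_add]; exact R.mul_mem ih h₁
  | pred k ih => rw [sub_eq_add_neg, E_add, Ym_add]; exact R.mul_mem ih hinv

theorem LRing.subring_eq_top_of_Ym_mem {R : Subring (LRing J)}
    (hC : ∀ r : ℂ, AddMonoidAlgebra.single 0 r ∈ R)
    (hY : ∀ j n, Ym (E j n 1) ∈ R ∧ Ym (E j n (-1)) ∈ R) : R = ⊤ := by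
  have hYm (v : LExp J) : Ym v ∈ R := by
    induction v using Finsupp.induction with
    | zero => rw [Ym_zero]; exact R.one_mem
    | single_add q k v _ _ ih =>
      rw [Ym_add]
      exact R.mul_mem (Ym_E_mem (hY q.1 q.2).1 (hY q.1 q.2).2 k) ih
  refine (Subring.eq_top_iff' R).mpr fun x => ?_
  induction x using AddMonoidAlgebra.induction_linear with
  | zero => exact R.zero_mem
  | add x y hx hy => exact R.add_mem hx hy
  | single v r => rw [single_eq_single_zero_mul_Ym]; exact R.mul_mem (hC r) (hYm v)

end Monomials

def IsDerivationAlong {A B M : Type*} [Semiring A] [Semiring B] [AddCommMonoid M] [Module B M]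
    (f : A →+* B) (D : A → M) : Prop :=
  ∀ x y, D (x * y) = f x • D y + f y • D x

namespace IsDerivationAlong

section

variable {A B M : Type*} [CommRing A] [CommRing B] [AddCommGroup M] [Module B M]
  {f : A →+* B} {D : A → M}

lemma map_one (hD : IsDerivationAlong f D) : D 1 = 0 := by
  simpa using hD 1 1

lemma map_eq_of_mul_eq_one (hD : IsDerivationAlong f D) {u w : A} (huw : u * w = 1) :
    D w = -(f w * f w) • D u := by
  have h : f u • D w + f w • D u = 0 := by rw [← hD, huw, hD.map_one]
  calc D w = f (w * u) • D w := by rw [mul_comm, huw, RingHom.map_one, one_smul]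
    _ = f w • f u • D w := by rw [RingHom.map_mul, mul_smul]
    _ = -(f w * f w) • D u := by rw [eq_neg_of_add_eq_zero_left h, smul_neg, ← mul_smul, neg_smul]

lemma finset_sum {ι : Type*} {s : Finset ι} {D : ι → A → M}
    (hD : ∀ i ∈ s, IsDerivationAlong f (D i)) : IsDerivationAlong f (∑ i ∈ s, D i) := by
  intro x y
  simp only [Finset.sum_apply, Finset.smul_sum, ← Finset.sum_add_distrib]
  exact Finset.sum_congr rfl fun i hi => hD i hi x y

end

section

variable {A B M N : Type*} [CommRing A] [CommRing B] [AddCommGroup M] [Module A M]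
  [AddCommGroup N] [Module B N]

lemma comp_ringHom {g : B →+* A} {D : A → M}
    (hD : IsDerivationAlong (RingHom.id A) D) : IsDerivationAlong g (D ∘ g) := by
  intro x y
  simp [hD (g x) (g y)]

lemma semilinearMap_comp {g : A →+* B} {D : A → M}
    (hD : IsDerivationAlong (RingHom.id A) D) (p : M →ₛₗ[g] N) :
    IsDerivationAlong g (p ∘ D) := by
  intro x y
  simp [hD x y]

end

theorem addMonoidHom_ext {J : Type} {B M : Type*} [CommRing B]
    [AddCommGroup M] [Module B M] {f : LRing J →+* B} {D₁ D₂ : LRing J →+ M}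
    (h₁ : IsDerivationAlong f D₁) (h₂ : IsDerivationAlong f D₂)
    (hC : ∀ r : ℂ, D₁ (AddMonoidAlgebra.single 0 r) = D₂ (AddMonoidAlgebra.single 0 r))
    (hY : ∀ j n, D₁ (Ym (E j n 1)) = D₂ (Ym (E j n 1))) : D₁ = D₂ := by
  let R : Subring (LRing J) :=
    { carrier := {x | D₁ x = D₂ x}
      zero_mem' := by simp
      add_mem' := fun hx hy => by simp_all
      neg_mem' := fun hx => by simp_all
      one_mem' := by simp [h₁.map_one, h₂.map_one]
      mul_mem' := fun {x y} hx hy => by simp_all [h₁ x y, h₂ x y] }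
  have hinv (j : J) (n : ℤ) : D₁ (Ym (E j n (-1))) = D₂ (Ym (E j n (-1))) := by
    rw [h₁.map_eq_of_mul_eq_one (Ym_E_one_mul_Ym_E_neg_one j n),
      h₂.map_eq_of_mul_eq_one (Ym_E_one_mul_Ym_E_neg_one j n), hY]
  have hR : R = ⊤ := LRing.subring_eq_top_of_Ym_mem hC fun j n => ⟨hY j n, hinv j n⟩
  exact AddMonoidHom.ext ((Subring.eq_top_iff' R).mp hR)

lemma map_single_zero {J : Type} {B M : Type*} [CommRing B] [AddCommGroup M]
    [Module B M] [Module ℂ M] {f : LRing J →+* B} {D : LRing J →ₗ[ℂ] M}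
    (hD : IsDerivationAlong f D) (r : ℂ) : D (AddMonoidAlgebra.single 0 r) = 0 := by
  rw [show (AddMonoidAlgebra.single 0 r : LRing J) = r • 1 by simp [AddMonoidAlgebra.one_def],
    map_smul, hD.map_one, smul_zero]

end IsDerivationAlong

section Folding

variable {I' I : Type} (cl : I' → I)

noncomputable def foldExp : LExp I' →+ LExp I :=
  Finsupp.mapDomain.addMonoidHom (Prod.map cl id)

lemma foldExp_E (j : I') (n k : ℤ) : foldExp cl (E j n k) = E (cl j) n k :=
  Finsupp.mapDomain_single

lemma foldPi_single (v : LExp I') (r : ℂ) :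
    foldPi cl (AddMonoidAlgebra.single v r) = AddMonoidAlgebra.single (foldExp cl v) r :=
  AddMonoidAlgebra.mapDomain_single

lemma foldPi_Ym (v : LExp I') : foldPi cl (Ym v) = Ym (foldExp cl v) :=
  foldPi_single cl v 1

end Folding

section Screening

variable {I' I : Type} [Fintype I'] [DecidableEq I'] [Fintype I] [DecidableEq I] {cl : I' → I}
  {A' : I' → I' → ℤ} {c : I → I → ℤ}

lemma foldExp_AexpSL (horb : ∀ i j : I', i ≠ j → cl i = cl j → A' i j = 0)
    (hc : ∀ (i : I') (jb : I), c jb (cl i) = ∑ j' : I', if cl j' = jb then A' j' i else 0)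
    (i : I') (n : ℤ) : foldExp cl (AexpSL A' i n) = AexpF c (cl i) n := by
  rw [AexpSL, AexpF, map_add, map_add, foldExp_E, foldExp_E, map_sum]
  congr 1
  simp only [foldExp_E]
  set s := Finset.univ.filter fun j => cl j ≠ cl i
  have hlhs : ∑ j ∈ Finset.univ.erase i, E (cl j) n (A' j i) = ∑ j ∈ s, E (cl j) n (A' j i) := by
    refine (Finset.sum_subset (fun j hj => ?_) fun j hj hjs => ?_).symm
    · exact Finset.mem_erase.mpr ⟨fun h => (Finset.mem_filter.mp hj).2 (h ▸ rfl), Finset.mem_univ _⟩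
    · have hji : cl j = cl i := by simpa [s] using hjs
      rw [horb j i (Finset.ne_of_mem_erase hj) hji, E_zero]
  have hfiber (jb : I) (hjb : jb ∈ Finset.univ.erase (cl i)) :
      ∑ j ∈ s with cl j = jb, E (cl j) n (A' j i) = E jb n (c jb (cl i)) := by
    have hs : s.filter (cl · = jb) = Finset.univ.filter (cl · = jb) := by
      ext j
      simp only [s, Finset.mem_filter, Finset.mem_univ, true_and, and_iff_right_iff_imp]
      rintro rfl
      exact Finset.ne_of_mem_erase hjb
    rw [hc, ← Finset.sum_filter, hs, E, Finsupp.single_finsetSum]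
    exact Finset.sum_congr rfl fun j hj => by rw [(Finset.mem_filter.mp hj).2]; rfl
  rw [hlhs, ← Finset.sum_fiberwise_of_maps_to (t := Finset.univ.erase (cl i)) (g := cl)
    fun j hj => Finset.mem_erase.mpr ⟨(Finset.mem_filter.mp hj).2, Finset.mem_univ _⟩]
  exact Finset.sum_congr rfl hfiber

noncomputable def foldScrMod (horb : ∀ i j : I', i ≠ j → cl i = cl j → A' i j = 0)
    (hc : ∀ (i : I') (jb : I), c jb (cl i) = ∑ j' : I', if cl j' = jb then A' j' i else 0)
    {ib : I} {i' : I'} (h : cl i' = ib) :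
    ScrMod (AexpSL A' i') →ₛₗ[foldPi cl] ScrMod (AexpF c ib) :=
  (scrRel (AexpSL A' i')).liftQ
    ((scrRel (AexpF c ib)).mkQ.comp (Finsupp.mapRange.linearMap (foldPi cl).toSemilinearMap)) <| by
      rw [scrRel, Submodule.span_le]
      rintro _ ⟨n, rfl⟩
      subst h
      simp only [SetLike.mem_coe, LinearMap.mem_ker, LinearMap.comp_apply, map_sub,
        LinearMap.map_smulₛₗ, Finsupp.mapRange.linearMap_apply, Finsupp.mapRange_single,
        RingHom.coe_toSemilinearMap, map_one, foldPi_Ym, foldExp_AexpSL horb hc,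
        Submodule.mkQ_apply, ← Submodule.Quotient.mk_smul, ← Submodule.Quotient.mk_sub,
        Submodule.Quotient.mk_eq_zero]
      exact Submodule.subset_span ⟨n, rfl⟩

lemma foldScrMod_ebar (horb : ∀ i j : I', i ≠ j → cl i = cl j → A' i j = 0)
    (hc : ∀ (i : I') (jb : I), c jb (cl i) = ∑ j' : I', if cl j' = jb then A' j' i else 0)
    {ib : I} {i' : I'} (h : cl i' = ib) (n : ℤ) :
    foldScrMod horb hc h (ebar (AexpSL A' i') n) = ebar (AexpF c ib) n := by
  simp [foldScrMod, ebar]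

theorem screening_foldPi_eq_sum (horb : ∀ i j : I', i ≠ j → cl i = cl j → A' i j = 0)
    (hc : ∀ (i : I') (jb : I), c jb (cl i) = ∑ j' : I', if cl j' = jb then A' j' i else 0)
    (S' : ∀ i' : I', LRing I' →ₗ[ℂ] ScrMod (AexpSL A' i'))
    (hLeib' : ∀ i', IsDerivationAlong (RingHom.id _) (S' i'))
    (hval' : ∀ (i' j : I') (n : ℤ),
      S' i' (Ym (E j n 1)) = if j = i' then Ym (E i' n 1) • ebar (AexpSL A' i') n else 0)
    (S : ∀ ib : I, LRing I →ₗ[ℂ] ScrMod (AexpF c ib))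
    (hLeib : ∀ ib, IsDerivationAlong (RingHom.id _) (S ib))
    (hval : ∀ (ib jb : I) (n : ℤ),
      S ib (Ym (E jb n 1)) = if jb = ib then Ym (E ib n 1) • ebar (AexpF c ib) n else 0)
    (ib : I) (x : LRing I') :
    S ib (foldPi cl x) =
      ∑ j ∈ (Finset.univ.filter fun i' : I' => cl i' = ib).attach,
        foldScrMod horb hc (Finset.mem_filter.mp j.2).2 (S' j.1 x) := by
  set T := Finset.univ.filter fun i' : I' => cl i' = ib
  let p (j : {i' // i' ∈ T}) := foldScrMod horb hc (Finset.mem_filter.mp j.2).2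
  have hY (j : I') (n : ℤ) :
      S ib (foldPi cl (Ym (E j n 1))) = ∑ i ∈ T.attach, p i (S' i.1 (Ym (E j n 1))) := by
    rw [foldPi_Ym, foldExp_E, hval]
    simp only [hval', apply_ite (p _), map_zero]
    by_cases hj : cl j = ib
    · rw [Finset.sum_eq_single_of_mem ⟨j, Finset.mem_filter.mpr ⟨Finset.mem_univ j, hj⟩⟩
        (Finset.mem_attach _ _) fun i _ hi => if_neg fun h => hi (Subtype.ext h.symm)]
      simp [p, hj, foldScrMod_ebar, foldPi_Ym, foldExp_E]
    · refine (if_neg hj).trans (Finset.sum_eq_zero fun i _ => if_neg fun h => hj ?_).symm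
      exact h ▸ (Finset.mem_filter.mp i.2).2
  have key := IsDerivationAlong.addMonoidHom_ext (f := foldPi cl)
    (D₁ := (S ib).toAddMonoidHom.comp (foldPi cl).toAddMonoidHom)
    (D₂ := ∑ i ∈ T.attach, (p i).toAddMonoidHom.comp (S' i.1).toAddMonoidHom)
    ((hLeib ib).comp_ringHom)
    (by rw [AddMonoidHom.coe_finsetSum]; exact IsDerivationAlong.finset_sum fun i _ =>
      (hLeib' i.1).semilinearMap_comp (p i))
    (fun r => by simp [foldPi_single, (hLeib ib).map_single_zero, (hLeib' _).map_single_zero])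
    (by simpa using hY)
  simpa using congr($key x)

end Screening

theorem stmt8_general {I' : Type} [Fintype I'] [DecidableEq I'] (A' : I' → I' → ℤ)
    {I : Type} [Fintype I] [DecidableEq I] (cl : I' → I)
    (horb : ∀ i j : I', i ≠ j → cl i = cl j → A' i j = 0)
    (c : I → I → ℤ)
    (hc : ∀ (i : I') (jb : I), c jb (cl i) = ∑ j' : I', if cl j' = jb then A' j' i else 0)
    (S' : ∀ i' : I', LRing I' →ₗ[ℂ] ScrMod (AexpSL A' i'))
    (hLeib' : ∀ (i' : I') (x y : LRing I'),
      S' i' (x * y) = x • S' i' y + y • S' i' x)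
    (hval' : ∀ (i' j : I') (n : ℤ),
      S' i' (Ym (E j n 1)) = if j = i' then Ym (E i' n 1) • ebar (AexpSL A' i') n else 0)
    (S : ∀ ib : I, LRing I →ₗ[ℂ] ScrMod (AexpF c ib))
    (hLeib : ∀ (ib : I) (x y : LRing I),
      S ib (x * y) = x • S ib y + y • S ib x)
    (hval : ∀ (ib jb : I) (n : ℤ),
      S ib (Ym (E jb n 1)) = if jb = ib then Ym (E ib n 1) • ebar (AexpF c ib) n else 0) :
    (∃ p : ∀ (ib : I) (i' : I'), cl i' = ib →
        (ScrMod (AexpSL A' i') →+ ScrMod (AexpF c ib)),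
      (∀ (ib : I) (i' : I') (h : cl i' = ib) (x : LRing I') (mm : ScrMod (AexpSL A' i')),
        p ib i' h (x • mm) = foldPi cl x • p ib i' h mm) ∧
      (∀ (ib : I) (i' : I') (h : cl i' = ib) (n : ℤ),
        p ib i' h (ebar (AexpSL A' i') n) = ebar (AexpF c ib) n) ∧
      (∀ (ib : I) (x : LRing I'),
        S ib (foldPi cl x) =
          ∑ j ∈ (Finset.univ.filter fun i' : I' => cl i' = ib).attach,
            p ib j.1 (Finset.mem_filter.mp j.2).2 (S' j.1 x))) ∧
    (∀ x : LRing I', (∀ i' : I', S' i' x = 0) → ∀ ib : I, S ib (foldPi cl x) = 0) := by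
  have hfold := screening_foldPi_eq_sum horb hc S' hLeib' hval' S hLeib hval
  refine ⟨⟨fun _ _ h => (foldScrMod horb hc h).toAddMonoidHom,
    fun _ _ h => (foldScrMod horb hc h).map_smulₛₗ, fun _ _ h => foldScrMod_ebar horb hc h,
    hfold⟩, fun x hx ib => ?_⟩
  rw [hfold]
  exact Finset.sum_eq_zero fun j _ => by rw [hx, map_zero]

/-- For a simply-laced folding datum `(I′, A′, σ)` with orbit set `I` and
folded matrix `c`: (a) for each orbit `ī` and each `i′ ∈ ī` there is an additive map
`p_{i′} : M′_{i′} → M_ī`, semilinear over the folding homomorphism `π` and sending `ē_n` to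
`ē_n`, such that `S⁻_ī ∘ π = Σ_{i′∈ī} p_{i′} ∘ S′⁻_{i′}`; (b) consequently `π` maps
`⋂_{i∈I′} Ker S′⁻_i` into `⋂_{ī∈I} Ker S⁻_ī`. -/
theorem stmt8 {I' : Type} [Fintype I'] [DecidableEq I'] (A' : I' → I' → ℤ)
    (σ : Equiv.Perm I')
    (hsymm : ∀ i j, A' i j = A' j i)
    (hdiag : ∀ i, A' i i = 2)
    (hoff : ∀ i j, i ≠ j → A' i j = 0 ∨ A' i j = -1)
    (hσ : ∀ i j, A' (σ i) (σ j) = A' i j)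
    {I : Type} [Fintype I] [DecidableEq I] (cl : I' → I)
    (hcl_surj : Function.Surjective cl)
    (hcl : ∀ i j : I', cl i = cl j ↔ ∃ k : ℤ, (σ ^ k) i = j)
    (horb : ∀ i j : I', i ≠ j → cl i = cl j → A' i j = 0)
    (c : I → I → ℤ)
    (hc : ∀ (i : I') (jb : I), c jb (cl i) = ∑ j' : I', if cl j' = jb then A' j' i else 0)
    (S' : ∀ i' : I', LRing I' →ₗ[ℂ] ScrMod (AexpSL A' i'))
    (hLeib' : ∀ (i' : I') (x y : LRing I'),
      S' i' (x * y) = x • S' i' y + y • S' i' x)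
    (hval' : ∀ (i' j : I') (n : ℤ),
      S' i' (Ym (E j n 1)) = if j = i' then Ym (E i' n 1) • ebar (AexpSL A' i') n else 0)
    (S : ∀ ib : I, LRing I →ₗ[ℂ] ScrMod (AexpF c ib))
    (hLeib : ∀ (ib : I) (x y : LRing I),
      S ib (x * y) = x • S ib y + y • S ib x)
    (hval : ∀ (ib jb : I) (n : ℤ),
      S ib (Ym (E jb n 1)) = if jb = ib then Ym (E ib n 1) • ebar (AexpF c ib) n else 0) :
    (∃ p : ∀ (ib : I) (i' : I'), cl i' = ib →
        (ScrMod (AexpSL A' i') →+ ScrMod (AexpF c ib)),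
      (∀ (ib : I) (i' : I') (h : cl i' = ib) (x : LRing I') (mm : ScrMod (AexpSL A' i')),
        p ib i' h (x • mm) = foldPi cl x • p ib i' h mm) ∧
      (∀ (ib : I) (i' : I') (h : cl i' = ib) (n : ℤ),
        p ib i' h (ebar (AexpSL A' i') n) = ebar (AexpF c ib) n) ∧
      (∀ (ib : I) (x : LRing I'),
        S ib (foldPi cl x) =
          ∑ j ∈ (Finset.univ.filter fun i' : I' => cl i' = ib).attach,
            p ib j.1 (Finset.mem_filter.mp j.2).2 (S' j.1 x))) ∧
    (∀ x : LRing I', (∀ i' : I', S' i' x = 0) → ∀ ib : I, S ib (foldPi cl x) = 0) :=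
  stmt8_general A' cl horb c hc S' hLeib' hval' S hLeib hval
end

section
/- Let (I′, A′, σ) be a simply-laced folding datum with orbit set I, and set C_{j̄ī} = Σ_{j′∈j̄} A′_{j′i} for distinct orbits ī ≠ j̄ with representative i ∈ ī. Fix q ∈ ℂ^×, N ≥ 0, and for each orbit ī ∈ I: an integer m_ī ≥ 0, nonzero complex numbers w^{(ī)}_1, …, w^{(ī)}_{m_ī}, and polynomials P_{ī,1}, …, P_{ī,N} ∈ ℂ[z]. For i ∈ I′ set m_i = m_{[i]}, w^{(i)}_r = w^{([i])}_r, P_{i,k} = P_{[i],k}. Assume nondegeneracy: P_{ī,k}(q / w^{(ī)}_r) ≠ 0 for all ī, r, k; w^{(ī)}_r ≠ w^{(ī)}_s q² for all ī and r ≠ s; and w^{(ī)}_r ≠ w^{(j̄)}_s q whenever ī ≠ j̄ with C_{j̄ī} ≠ 0. Then for every i ∈ I′ and 1 ≤ r ≤ m_i, the type-𝔤′ Bethe Ansatz equation at (i, r), namely ∏_{k=1}^{N} q^{deg P_{i,k}} · P_{i,k}(q^{−1}/w^{(i)}_r)/P_{i,k}(q/w^{(i)}_r) = − ∏_{s≠r}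 (w^{(i)}_r − w^{(i)}_s q^{−2})/(w^{(i)}_r − w^{(i)}_s q²) · ∏_{j∈I′, A′_{ij}=−1} ∏_{s=1}^{m_j} (w^{(i)}_r − w^{(j)}_s q)/(w^{(i)}_r − w^{(j)}_s q^{−1}), has the same left-hand side and the same right-hand side as the folded Bethe Ansatz equation at ([i], r), namely ∏_{k=1}^{N} q^{deg P_{[i],k}} · P_{[i],k}(q^{−1}/w^{([i])}_r)/P_{[i],k}(q/w^{([i])}_r) = − ∏_{s≠r} (w^{([i])}_r − w^{([i])}_s q^{−2})/(w^{([i])}_r − w^{([i])}_s q²) · ∏_{j̄∈I, j̄≠[i]} ∏_{s=1}^{m_{j̄}} (w^{([i])}_r − w^{(j̄)}_s q)^{−C_{j̄[i]}}/(w^{([i])}_r − w^{(j̄)}_s q^{−1})^{−C_{j̄[i]}}. Consequently the tuple (w^{(ī)}_r) solves the simply-laced system for 𝔤′ (with the identifications above) if and only if it solves the folded system for 𝔤. -/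
/-- Left-hand side of the Bethe Ansatz equation at `(ī, r)` (quantum parameter `q`). -/
noncomputable def lhsBAE {I : Type} (q : ℂ) {N : ℕ} (P : I → Fin N → Polynomial ℂ)
    (m : I → ℕ) (w : ∀ ib : I, Fin (m ib) → ℂ) (ib : I) (r : Fin (m ib)) : ℂ :=
  ∏ k : Fin N,
    q ^ (P ib k).natDegree * (P ib k).eval (q⁻¹ / w ib r) / (P ib k).eval (q / w ib r)

/-- Left-hand side of the type-`𝔤′` Bethe Ansatz equation at `(i, r)`, with the data
pulled back through the orbit map `cl`. -/
noncomputable def lhsSL {I' I : Type} (q : ℂ) {N : ℕ} (P : I → Fin N → Polynomial ℂ)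
    (cl : I' → I) (m : I → ℕ) (w : ∀ ib : I, Fin (m ib) → ℂ)
    (i : I') (r : Fin (m (cl i))) : ℂ :=
  ∏ k : Fin N,
    q ^ (P (cl i) k).natDegree * (P (cl i) k).eval (q⁻¹ / w (cl i) r) /
      (P (cl i) k).eval (q / w (cl i) r)

/-- Right-hand side of the type-`𝔤′` (simply-laced) Bethe Ansatz equation at `(i, r)`,
with the data pulled back through the orbit map `cl`. -/
noncomputable def rhsSL {I' I : Type} [Fintype I'] [DecidableEq I'] (q : ℂ)
    (A' : I' → I' → ℤ) (cl : I' → I) (m : I → ℕ) (w : ∀ ib : I, Fin (m ib) → ℂ)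
    (i : I') (r : Fin (m (cl i))) : ℂ :=
  -((∏ s ∈ Finset.univ.erase r,
        (w (cl i) r - w (cl i) s * q ^ (-2 : ℤ)) / (w (cl i) r - w (cl i) s * q ^ (2 : ℤ))) *
      ∏ j ∈ Finset.univ.filter (fun j : I' => A' i j = -1), ∏ s : Fin (m (cl j)),
        (w (cl i) r - w (cl j) s * q) / (w (cl i) r - w (cl j) s * q⁻¹))

/-- Right-hand side of the folded Bethe Ansatz equation at `(ī, r)`. -/
noncomputable def rhsFold {I : Type} [Fintype I] [DecidableEq I] (q : ℂ) (c : I → I → ℤ)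
    (m : I → ℕ) (w : ∀ ib : I, Fin (m ib) → ℂ) (ib : I) (r : Fin (m ib)) : ℂ :=
  -((∏ s ∈ Finset.univ.erase r,
        (w ib r - w ib s * q ^ (-2 : ℤ)) / (w ib r - w ib s * q ^ (2 : ℤ))) *
      ∏ jb ∈ Finset.univ.erase ib, ∏ s : Fin (m jb),
        (w ib r - w jb s * q) ^ (-(c jb ib)) / (w ib r - w jb s * q⁻¹) ^ (-(c jb ib)))

/-- For a simply-laced folding datum with folded Cartan data `c` and
`σ`-invariant Bethe Ansatz data, under the stated nondegeneracy conditions each type-`𝔤′`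
Bethe Ansatz equation at `(i, r)` has the same left- and right-hand sides as the folded
Bethe Ansatz equation at `([i], r)`; consequently the tuple `(w^{(ī)}_r)` solves the
simply-laced system if and only if it solves the folded system. -/
theorem stmt9 {I' : Type} [Fintype I'] [DecidableEq I'] (A' : I' → I' → ℤ)
    (σ : Equiv.Perm I')
    (hsymm : ∀ i j, A' i j = A' j i)
    (hdiag : ∀ i, A' i i = 2)
    (hoff : ∀ i j, i ≠ j → A' i j = 0 ∨ A' i j = -1)
    (hσ : ∀ i j, A' (σ i) (σ j) = A' i j)
    {I : Type} [Fintype I] [DecidableEq I] (cl : I' → I)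
    (hcl_surj : Function.Surjective cl)
    (hcl : ∀ i j : I', cl i = cl j ↔ ∃ k : ℤ, (σ ^ k) i = j)
    (horb : ∀ i j : I', i ≠ j → cl i = cl j → A' i j = 0)
    (c : I → I → ℤ)
    (hc : ∀ (i : I') (jb : I), jb ≠ cl i →
      c jb (cl i) = ∑ j' : I', if cl j' = jb then A' j' i else 0)
    (q : ℂ) (hq : q ≠ 0) (N : ℕ) (m : I → ℕ)
    (w : ∀ ib : I, Fin (m ib) → ℂ) (hw : ∀ (ib : I) (r : Fin (m ib)), w ib r ≠ 0)
    (P : I → Fin N → Polynomial ℂ)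
    (hP : ∀ (ib : I) (r : Fin (m ib)) (k : Fin N), (P ib k).eval (q / w ib r) ≠ 0)
    (hsep : ∀ (ib : I) (r s : Fin (m ib)), r ≠ s → w ib r ≠ w ib s * q ^ (2 : ℤ))
    (hcross : ∀ ib jb : I, ib ≠ jb → c jb ib ≠ 0 →
      ∀ (r : Fin (m ib)) (s : Fin (m jb)), w ib r ≠ w jb s * q) :
    (∀ (i : I') (r : Fin (m (cl i))),
      lhsSL q P cl m w i r = lhsBAE q P m w (cl i) r ∧
        rhsSL q A' cl m w i r = rhsFold q c m w (cl i) r) ∧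
    ((∀ (i : I') (r : Fin (m (cl i))), lhsSL q P cl m w i r = rhsSL q A' cl m w i r) ↔
      (∀ (ib : I) (r : Fin (m ib)), lhsBAE q P m w ib r = rhsFold q c m w ib r)) := by
  classical
  have keyR : ∀ (i : I') (r : Fin (m (cl i))),
      rhsSL q A' cl m w i r = rhsFold q c m w (cl i) r := by
    intro i r
    unfold rhsSL rhsFold
    congr 1
    congr 1
    have hmaps : ∀ j ∈ Finset.univ.filter (fun j : I' => A' i j = -1),
        cl j ∈ Finset.univ.erase (cl i) := by
      intro j hj
      simp only [Finset.mem_filter] at hj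
      refine Finset.mem_erase.mpr ⟨?_, Finset.mem_univ _⟩
      intro hEq
      by_cases hij : i = j
      · subst hij
        rw [hdiag] at hj
        omega
      · have h0 := horb i j hij hEq.symm
        rw [hsymm i j] at hj
        have h0' := (hsymm j i).trans h0
        omega
    rw [← Finset.prod_fiberwise_of_maps_to hmaps
      (fun j => ∏ s : Fin (m (cl j)),
        (w (cl i) r - w (cl j) s * q) / (w (cl i) r - w (cl j) s * q⁻¹))]
    apply Finset.prod_congr rfl
    intro jb hjb
    have hne : jb ≠ cl i := (Finset.mem_erase.mp hjb).1
    have inner_eq : ∀ j : I', cl j = jb →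
        (∏ s : Fin (m (cl j)),
            (w (cl i) r - w (cl j) s * q) / (w (cl i) r - w (cl j) s * q⁻¹))
          = ∏ s : Fin (m jb), (w (cl i) r - w jb s * q) / (w (cl i) r - w jb s * q⁻¹) := by
      intro j h
      subst h
      rfl
    have hterm : ∀ j' : I', (if cl j' = jb then A' j' i else 0)
        = (if A' i j' = -1 ∧ cl j' = jb then (-1 : ℤ) else 0) := by
      intro j'
      by_cases h1 : cl j' = jb
      · have hji : j' ≠ i := by
          rintro rfl
          exact hne (h1 ▸ rfl)
        rw [hsymm i j']
        rcases hoff j' i hji with h0 | hm1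
        · simp [h1, h0]
        · simp [h1, hm1]
      · simp [h1]
    have hcard : -(c jb (cl i))
        = ((Finset.univ.filter (fun j : I' => A' i j = -1 ∧ cl j = jb)).card : ℤ) := by
      rw [hc i jb hne, Finset.sum_congr rfl (fun j' _ => hterm j'), ← Finset.sum_filter,
        Finset.sum_const]
      simp
    rw [Finset.filter_filter]
    rw [Finset.prod_congr rfl
      (fun j hj => inner_eq j (Finset.mem_filter.mp hj).2.2), Finset.prod_const]
    rw [hcard]
    simp_rw [zpow_natCast, ← div_pow]
    rw [Finset.prod_pow]
  refine ⟨fun i r => ⟨rfl, keyR i r⟩, ?_, ?_⟩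
  · intro h ib r
    obtain ⟨i, rfl⟩ := hcl_surj ib
    have := h i r
    rw [keyR i r] at this
    exact this
  · intro h i r
    rw [keyR i r]
    exact h (cl i) r
end

section
/- Let (I′, A′, σ) be a simply-laced folding datum with orbit set I, and set a_{ī j̄} = Σ_{j′∈j̄} A′_{i j′} for orbits ī, j̄ ∈ I and a representative i ∈ ī (well defined; note a_{ī ī} = 2 by admissibility). Fix N ≥ 0, distinct complex numbers z_1, …, z_N, numbers λ_{ī,k} ∈ ℂ and χ_ī ∈ ℂ for each ī ∈ I and 1 ≤ k ≤ N, an integer m ≥ 0, orbits i_1, …, i_m ∈ I, and complex numbers w_1, …, w_m with w_j ≠ z_k for all j, k, and w_j ≠ w_s whenever j ≠ s and a_{i_j i_s} ≠ 0. Consider: (A) the folded system: for each j = 1, …, m, Σ_{k=1}^{N} λ_{i_j,k}/(w_j − z_k) − Σ_{s≠j} a_{i_j i_s}/(w_j − w_s) = χ_{i_j}; and (B) the simply-laced system of type 𝔤′ obtained by unfolding: its Bethe roots are the pairs (j, i′) with 1 ≤ j ≤ m and i′ in the orbit i_j, the root (j, i′) carrying label i′ ∈ I′ and value w_j, with data λ_{i′,k}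 := λ_{[i′],k} and χ_{i′} := χ_{[i′]}; its equations are, for each pair (j, i′): Σ_{k=1}^{N} λ_{i′,k}/(w_j − z_k) − Σ_{(s,j″) ≠ (j,i′), A′_{i′ j″} ≠ 0} A′_{i′ j″}/(w_j − w_s) = χ_{i′} (the sum ranging over all other Bethe roots (s, j″), terms with vanishing coefficient A′_{i′ j″} being omitted, so no division by zero occurs). Then system (B) holds if and only if system (A) holds; indeed for every pair (j, i′) the equation of (B) at (j, i′) coincides with the equation of (A) at j. -/
/-- Left-hand side of the Bethe Ansatz equation of the `ᴸ𝔤`-Gaudin model (system (A))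
at the Bethe root `j`. -/
noncomputable def gaudinLHSFold {I : Type} [DecidableEq I] (a : I → I → ℤ) {N : ℕ}
    (z : Fin N → ℂ) (lam : I → Fin N → ℂ) {m : ℕ} (ι : Fin m → I) (w : Fin m → ℂ)
    (j : Fin m) : ℂ :=
  (∑ k : Fin N, lam (ι j) k / (w j - z k))
    - ∑ s ∈ Finset.univ.erase j, (a (ι j) (ι s) : ℂ) / (w j - w s)

/-- Left-hand side of the Bethe Ansatz equation of the simply-laced `𝔤′`-Gaudin model
(system (B)) at the Bethe root `(j, i′)`; the sum ranges over all other Bethe roots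
`(s, j″)` (pairs with `cl j″ = ι s`) with nonvanishing coefficient `A′_{i′ j″}`. -/
noncomputable def gaudinLHSSL {I' I : Type} [Fintype I'] [DecidableEq I'] [DecidableEq I]
    (A' : I' → I' → ℤ) (cl : I' → I) {N : ℕ} (z : Fin N → ℂ) (lam : I → Fin N → ℂ)
    {m : ℕ} (ι : Fin m → I) (w : Fin m → ℂ) (j : Fin m) (i' : I') : ℂ :=
  (∑ k : Fin N, lam (cl i') k / (w j - z k))
    - ∑ p : Fin m × I',
        if cl p.2 = ι p.1 ∧ p ≠ (j, i') ∧ A' i' p.2 ≠ 0 then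
          (A' i' p.2 : ℂ) / (w j - w p.1)
        else 0

/-- Folding the Bethe Ansatz equations of the `𝔤′`-Gaudin model yields
the Bethe Ansatz equations of the `ᴸ𝔤`-Gaudin model: for every Bethe root `(j, i′)` of the
unfolded system (B), its equation coincides with the equation of the folded system (A) at
`j`; in particular (B) holds if and only if (A) holds. -/
theorem stmt10 {I' : Type} [Fintype I'] [DecidableEq I'] (A' : I' → I' → ℤ)
    (σ : Equiv.Perm I')
    (hsymm : ∀ i j, A' i j = A' j i)
    (hdiag : ∀ i, A' i i = 2)
    (hoff : ∀ i j, i ≠ j → A' i j = 0 ∨ A' i j = -1)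
    (hσ : ∀ i j, A' (σ i) (σ j) = A' i j)
    {I : Type} [Fintype I] [DecidableEq I] (cl : I' → I)
    (hcl_surj : Function.Surjective cl)
    (hcl : ∀ i j : I', cl i = cl j ↔ ∃ k : ℤ, (σ ^ k) i = j)
    (horb : ∀ i j : I', i ≠ j → cl i = cl j → A' i j = 0)
    (a : I → I → ℤ)
    (ha : ∀ (i : I') (jb : I), a (cl i) jb = ∑ j' : I', if cl j' = jb then A' i j' else 0)
    (N : ℕ) (z : Fin N → ℂ) (hz : Function.Injective z)
    (lam : I → Fin N → ℂ) (χ : I → ℂ)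
    (m : ℕ) (ι : Fin m → I) (w : Fin m → ℂ)
    (hwz : ∀ (j : Fin m) (k : Fin N), w j ≠ z k)
    (hww : ∀ j s : Fin m, j ≠ s → a (ι j) (ι s) ≠ 0 → w j ≠ w s) :
    (∀ (j : Fin m) (i' : I'), cl i' = ι j →
      gaudinLHSSL A' cl z lam ι w j i' = gaudinLHSFold a z lam ι w j ∧
        χ (cl i') = χ (ι j)) ∧
    ((∀ (j : Fin m) (i' : I'), cl i' = ι j →
        gaudinLHSSL A' cl z lam ι w j i' = χ (cl i')) ↔
      (∀ j : Fin m, gaudinLHSFold a z lam ι w j = χ (ι j))) := by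
  have key : ∀ (j : Fin m) (i' : I'), cl i' = ι j →
      gaudinLHSSL A' cl z lam ι w j i' = gaudinLHSFold a z lam ι w j := by
    intro j i' hji
    unfold gaudinLHSSL gaudinLHSFold
    rw [hji]
    congr 1
    rw [Fintype.sum_prod_type]
    rw [← Finset.add_sum_erase _ _ (Finset.mem_univ j)]
    have hFj : (∑ j'' : I', if cl j'' = ι j ∧ ((j, j'') : Fin m × I') ≠ (j, i') ∧
        A' i' j'' ≠ 0 then (A' i' j'' : ℂ) / (w j - w j) else 0) = 0 := by
      apply Finset.sum_eq_zero
      intro j'' _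
      rw [if_neg]
      rintro ⟨hc1, hc2, hc3⟩
      have hne : i' ≠ j'' := by rintro rfl; exact hc2 rfl
      exact hc3 (horb i' j'' hne (by rw [hji, hc1]))
    rw [hFj, zero_add]
    apply Finset.sum_congr rfl
    intro s hs
    have hsj : s ≠ j := (Finset.mem_erase.mp hs).1
    have hasum : a (ι j) (ι s) = ∑ j' : I', if cl j' = ι s then A' i' j' else 0 := by
      rw [← hji, ha]
    by_cases hA : a (ι j) (ι s) = 0
    · -- all relevant A' coefficients vanish
      have hne : ι s ≠ ι j := by
        intro he
        have h2 : a (ι j) (ι s) = 2 := by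
          rw [he, ← hji, ha, Finset.sum_eq_single i']
          · rw [if_pos rfl, hdiag]
          · intro b _ hb
            split_ifs with hc
            · exact horb i' b (Ne.symm hb) hc.symm
            · rfl
          · intro h; exact absurd (Finset.mem_univ i') h
        omega
      have hnonpos : ∀ j' ∈ (Finset.univ : Finset I'),
          (if cl j' = ι s then A' i' j' else 0) ≤ 0 := by
        intro j' _
        split_ifs with hc
        · have hne' : i' ≠ j' := by
            rintro rfl; exact hne (by rw [← hc, hji])
          rcases hoff i' j' hne' with h0 | h0 <;> omega
        · omega
      have hall := (Finset.sum_eq_zero_iff_of_nonpos hnonpos).mp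
        (hasum ▸ hA)
      have hzero : ∀ j'' : I', cl j'' = ι s → A' i' j'' = 0 := by
        intro j'' hc
        have := hall j'' (Finset.mem_univ j'')
        rwa [if_pos hc] at this
      rw [hA]
      push_cast
      rw [zero_div]
      apply Finset.sum_eq_zero
      intro j'' _
      rw [if_neg]
      rintro ⟨hc1, _, hc3⟩
      exact hc3 (hzero j'' hc1)
    · have hws : w j ≠ w s := hww j s (Ne.symm hsj) hA
      have hd : w j - w s ≠ 0 := sub_ne_zero.mpr hws
      rw [hasum]
      push_cast
      rw [Finset.sum_div]
      apply Finset.sum_congr rfl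
      intro j'' _
      by_cases h1 : cl j'' = ι s
      · by_cases h2 : A' i' j'' = 0
        · simp [h1, h2]
        · have h3 : ((s, j'') : Fin m × I') ≠ (j, i') := by
            intro he
            exact hsj (congrArg Prod.fst he)
          rw [if_pos ⟨h1, h3, h2⟩, if_pos h1]
      · rw [if_neg (by tauto), if_neg h1, zero_div]
  refine ⟨fun j i' h => ⟨key j i' h, by rw [h]⟩, ?_, ?_⟩
  · intro hB j
    obtain ⟨i', hi'⟩ := hcl_surj (ι j)
    rw [← key j i' hi', hB j i' hi', hi']
  · intro hA' j i' h
    rw [key j i' h, h]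
    exact hA' j
end

section
/- Fix an integer ℓ ≥ 2. Let R_D be the Laurent polynomial ring over ℤ in variables Y_{i,n} (1 ≤ i ≤ ℓ+1, n ∈ ℤ), let R_B be the Laurent polynomial ring over ℤ in variables Y_{i,n} (1 ≤ i ≤ ℓ, n ∈ ℤ), with the convention Y_{0,n} = 1 in both rings, and let π: R_D → R_B be the ring homomorphism with π(Y_{i,n}) = Y_{i,n} for i ≤ ℓ and π(Y_{ℓ+1,n}) = Y_{ℓ,n}. Define T^D = Σ_{i=1}^{ℓ−1} Y_{i,i−1} Y_{i−1,i}^{−1} + Y_{ℓ+1,ℓ−1} Y_{ℓ,ℓ−1} Y_{ℓ−1,ℓ}^{−1} + Y_{ℓ+1,ℓ−1} Y_{ℓ,ℓ+1}^{−1} + Y_{ℓ,ℓ−1} Y_{ℓ+1,ℓ+1}^{−1} + Y_{ℓ−1,ℓ} Y_{ℓ,ℓ+1}^{−1} Y_{ℓ+1,ℓ+1}^{−1} + Σ_{i=1}^{ℓ−1} Y_{i−1,2ℓ−i} Y_{i,2ℓ−i+1}^{−1} ∈ R_D, and T^B = Σ_{i=1}^{ℓ−1} Y_{i,i−1} Y_{i−1,i}^{−1}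 + Y_{ℓ,ℓ−1}² Y_{ℓ−1,ℓ}^{−1} + 2 Y_{ℓ,ℓ−1} Y_{ℓ,ℓ+1}^{−1} + Y_{ℓ−1,ℓ} Y_{ℓ,ℓ+1}^{−2} + Σ_{i=1}^{ℓ−1} Y_{i−1,2ℓ−i} Y_{i,2ℓ−i+1}^{−1} ∈ R_B. Then π(T^D) = T^B. -/
/-- Exponent lattice for Laurent monomials in the variables `Y_{i,n}`, `i ∈ ℕ`, `n ∈ ℤ`
(only the variables with `1 ≤ i ≤ ℓ+1` occur below; the convention `Y_{0,n} = 1` is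
implemented by the exponent helper `Ev`). -/
abbrev GExpN : Type := (ℕ × ℤ) →₀ ℤ

/-- The Laurent polynomial ring over `ℤ` in the variables `Y_{i,n}`. -/
abbrev LRN : Type := AddMonoidAlgebra ℤ GExpN

/-- The monomial with exponent vector `v`. -/
noncomputable def YmN (v : GExpN) : LRN := AddMonoidAlgebra.single v 1

/-- The exponent vector of `Y_{i,n}^k`, with the convention `Y_{0,n} = 1`
(i.e. exponent `0` for `i = 0`). -/
noncomputable def Ev (i : ℕ) (n k : ℤ) : GExpN :=
  if i = 0 then 0 else Finsupp.single (i, n) k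

/-- The folding ring homomorphism `π` with `π(Y_{i,n}) = Y_{i,n}` for `i ≤ ℓ` and
`π(Y_{ℓ+1,n}) = Y_{ℓ,n}`. -/
noncomputable def foldDB (ℓ : ℕ) : LRN →+* LRN :=
  AddMonoidAlgebra.mapDomainRingHom ℤ
    (Finsupp.mapDomain.addMonoidHom
      (Prod.map (fun i => if i = ℓ + 1 then ℓ else i) (id : ℤ → ℤ)))

/-- The `q → 1` limit `T^D` of the first generating field of the deformed `W`-algebra of
type `D_{ℓ+1}`. -/
noncomputable def TD (ℓ : ℕ) : LRN :=
  (∑ i ∈ Finset.Icc 1 (ℓ - 1), YmN (Ev i ((i : ℤ) - 1) 1 + Ev (i - 1) (i : ℤ) (-1)))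
    + YmN (Ev (ℓ + 1) ((ℓ : ℤ) - 1) 1 + Ev ℓ ((ℓ : ℤ) - 1) 1 + Ev (ℓ - 1) (ℓ : ℤ) (-1))
    + YmN (Ev (ℓ + 1) ((ℓ : ℤ) - 1) 1 + Ev ℓ ((ℓ : ℤ) + 1) (-1))
    + YmN (Ev ℓ ((ℓ : ℤ) - 1) 1 + Ev (ℓ + 1) ((ℓ : ℤ) + 1) (-1))
    + YmN (Ev (ℓ - 1) (ℓ : ℤ) 1 + Ev ℓ ((ℓ : ℤ) + 1) (-1) + Ev (ℓ + 1) ((ℓ : ℤ) + 1) (-1))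
    + ∑ i ∈ Finset.Icc 1 (ℓ - 1),
        YmN (Ev (i - 1) (2 * (ℓ : ℤ) - (i : ℤ)) 1 + Ev i (2 * (ℓ : ℤ) - (i : ℤ) + 1) (-1))

/-- The `q → 1` limit `T^B` of the first generating field of the deformed `W`-algebra of
type `B_ℓ`. -/
noncomputable def TB (ℓ : ℕ) : LRN :=
  (∑ i ∈ Finset.Icc 1 (ℓ - 1), YmN (Ev i ((i : ℤ) - 1) 1 + Ev (i - 1) (i : ℤ) (-1)))
    + YmN (Ev ℓ ((ℓ : ℤ) - 1) 2 + Ev (ℓ - 1) (ℓ : ℤ) (-1))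
    + 2 * YmN (Ev ℓ ((ℓ : ℤ) - 1) 1 + Ev ℓ ((ℓ : ℤ) + 1) (-1))
    + YmN (Ev (ℓ - 1) (ℓ : ℤ) 1 + Ev ℓ ((ℓ : ℤ) + 1) (-2))
    + ∑ i ∈ Finset.Icc 1 (ℓ - 1),
        YmN (Ev (i - 1) (2 * (ℓ : ℤ) - (i : ℤ)) 1 + Ev i (2 * (ℓ : ℤ) - (i : ℤ) + 1) (-1))

def gfun (ℓ : ℕ) : ℕ × ℤ → ℕ × ℤ :=
  Prod.map (fun i => if i = ℓ + 1 then ℓ else i) id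

lemma fold_YmN (ℓ : ℕ) (v : GExpN) :
    foldDB ℓ (YmN v) = YmN (Finsupp.mapDomain (gfun ℓ) v) := by
  simp [foldDB, YmN, gfun, Finsupp.mapDomain_single,
    Finsupp.mapDomain.addMonoidHom_apply]

lemma mapDomain_Ev (ℓ i : ℕ) (h : i ≠ ℓ + 1) (n k : ℤ) :
    Finsupp.mapDomain (gfun ℓ) (Ev i n k) = Ev i n k := by
  unfold Ev
  split
  · simp
  · rw [Finsupp.mapDomain_single]; simp [gfun, h]

lemma mapDomain_Ev_top (ℓ : ℕ) (hℓ : ℓ ≠ 0) (n k : ℤ) :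
    Finsupp.mapDomain (gfun ℓ) (Ev (ℓ + 1) n k) = Ev ℓ n k := by
  unfold Ev
  rw [if_neg (by omega), if_neg hℓ, Finsupp.mapDomain_single]
  simp [gfun]

/-- Folding (identifying `Y_{ℓ+1,n}` with `Y_{ℓ,n}`) carries the first
generating element `T^D` of the classical limit of the deformed `W`-algebra of type
`D_{ℓ+1}` to the element `T^B` of type `B_ℓ`. -/
theorem stmt12 (ℓ : ℕ) (hℓ : 2 ≤ ℓ) : foldDB ℓ (TD ℓ) = TB ℓ := by
  have hℓ0 : ℓ ≠ 0 := by omega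
  have h1 : foldDB ℓ (∑ i ∈ Finset.Icc 1 (ℓ - 1),
        YmN (Ev i ((i : ℤ) - 1) 1 + Ev (i - 1) (i : ℤ) (-1)))
      = ∑ i ∈ Finset.Icc 1 (ℓ - 1),
        YmN (Ev i ((i : ℤ) - 1) 1 + Ev (i - 1) (i : ℤ) (-1)) := by
    rw [map_sum]
    refine Finset.sum_congr rfl fun i hi => ?_
    simp only [Finset.mem_Icc] at hi
    rw [fold_YmN, Finsupp.mapDomain_add, mapDomain_Ev ℓ i (by omega),
      mapDomain_Ev ℓ (i - 1) (by omega)]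
  have h2 : foldDB ℓ (∑ i ∈ Finset.Icc 1 (ℓ - 1),
        YmN (Ev (i - 1) (2 * (ℓ : ℤ) - (i : ℤ)) 1 + Ev i (2 * (ℓ : ℤ) - (i : ℤ) + 1) (-1)))
      = ∑ i ∈ Finset.Icc 1 (ℓ - 1),
        YmN (Ev (i - 1) (2 * (ℓ : ℤ) - (i : ℤ)) 1 + Ev i (2 * (ℓ : ℤ) - (i : ℤ) + 1) (-1)) := by
    rw [map_sum]
    refine Finset.sum_congr rfl fun i hi => ?_
    simp only [Finset.mem_Icc] at hi
    rw [fold_YmN, Finsupp.mapDomain_add, mapDomain_Ev ℓ (i - 1) (by omega),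
      mapDomain_Ev ℓ i (by omega)]
  have hA : foldDB ℓ (YmN (Ev (ℓ + 1) ((ℓ : ℤ) - 1) 1 + Ev ℓ ((ℓ : ℤ) - 1) 1
        + Ev (ℓ - 1) (ℓ : ℤ) (-1)))
      = YmN (Ev ℓ ((ℓ : ℤ) - 1) 2 + Ev (ℓ - 1) (ℓ : ℤ) (-1)) := by
    rw [fold_YmN, Finsupp.mapDomain_add, Finsupp.mapDomain_add,
      mapDomain_Ev_top ℓ hℓ0, mapDomain_Ev ℓ ℓ (by omega),
      mapDomain_Ev ℓ (ℓ - 1) (by omega)]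
    congr 2
    unfold Ev
    rw [if_neg hℓ0, if_neg hℓ0, ← Finsupp.single_add]
    norm_num
  have hB : foldDB ℓ (YmN (Ev (ℓ + 1) ((ℓ : ℤ) - 1) 1 + Ev ℓ ((ℓ : ℤ) + 1) (-1)))
      = YmN (Ev ℓ ((ℓ : ℤ) - 1) 1 + Ev ℓ ((ℓ : ℤ) + 1) (-1)) := by
    rw [fold_YmN, Finsupp.mapDomain_add, mapDomain_Ev_top ℓ hℓ0,
      mapDomain_Ev ℓ ℓ (by omega)]
  have hC : foldDB ℓ (YmN (Ev ℓ ((ℓ : ℤ) - 1) 1 + Ev (ℓ + 1) ((ℓ : ℤ) + 1) (-1)))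
      = YmN (Ev ℓ ((ℓ : ℤ) - 1) 1 + Ev ℓ ((ℓ : ℤ) + 1) (-1)) := by
    rw [fold_YmN, Finsupp.mapDomain_add, mapDomain_Ev_top ℓ hℓ0,
      mapDomain_Ev ℓ ℓ (by omega)]
  have hD : foldDB ℓ (YmN (Ev (ℓ - 1) (ℓ : ℤ) 1 + Ev ℓ ((ℓ : ℤ) + 1) (-1)
        + Ev (ℓ + 1) ((ℓ : ℤ) + 1) (-1)))
      = YmN (Ev (ℓ - 1) (ℓ : ℤ) 1 + Ev ℓ ((ℓ : ℤ) + 1) (-2)) := by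
    rw [fold_YmN, Finsupp.mapDomain_add, Finsupp.mapDomain_add,
      mapDomain_Ev_top ℓ hℓ0, mapDomain_Ev ℓ ℓ (by omega),
      mapDomain_Ev ℓ (ℓ - 1) (by omega)]
    congr 1
    rw [add_assoc]
    congr 1
    simp only [Ev, if_neg hℓ0]
    rw [← Finsupp.single_add]
    norm_num
  unfold TD TB
  rw [map_add, map_add, map_add, map_add, map_add, h1, h2, hA, hB, hC, hD]
  ring
end

section
/- Consider Laurent monomials in the variables Y_{i,q^l} with i ∈ {1,2}, l ∈ ℤ, i.e., finitely supported functions m = ∏_{i,l} Y_{i,q^l}^{u_{i,l}(m)} with u_{i,l}(m) ∈ ℤ. Define for type C₂: A_{1,q^l} = Y_{1,q^{l−1}} Y_{1,q^{l+1}} Y_{2,q^l}^{−1} and A_{2,q^l} = Y_{2,q^{l−1}} Y_{2,q^{l+1}} Y_{1,q^l}^{−2}. For i ∈ {1,2} and a monomial m set φ_{i,L}(m) = Σ_{l≤L} u_{i,l}(m), φ_i(m) = max{φ_{i,L}(m) : L ∈ ℤ}, ε_{i,L}(m) = −Σ_{l≥L} u_{i,l}(m), ε_i(m) = max{ε_{i,L}(m)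 : L ∈ ℤ}, q_i(m) = min{L : φ_{i,L}(m) = φ_i(m)}, p_i(m) = max{L : ε_{i,L}(m) = ε_i(m)}. Define the Kashiwara operators: f̃_i(m) = 0 if φ_i(m) = 0 and f̃_i(m) = m·A_{i,q^{q_i(m)+1}}^{−1} if φ_i(m) > 0; ẽ_i(m) = 0 if ε_i(m) = 0 and ẽ_i(m) = m·A_{i,q^{p_i(m)−1}} if ε_i(m) > 0. Then the smallest set S of monomials containing Y_{2,q^0} and closed under ẽ_1, ẽ_2, f̃_1, f̃_2 (meaning that for m ∈ S and each i, if ẽ_i(m) ≠ 0 then ẽ_i(m) ∈ S, and if f̃_i(m) ≠ 0 then f̃_i(m) ∈ S) is exactly the five-element set { Y_{2,1}, Y_{2,q²}^{−1} Y_{1,q}², Y_{1,q} Y_{1,q³}^{−1}, Y_{1,q³}^{−2} Y_{2,q²}, Y_{2,q⁴}^{−1} } (where Y_{2,1} = Y_{2,q^0}). -/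
/-- Laurent monomials in the variables `Y_{i,q^l}`, `i ∈ {1,2}`, `l ∈ ℤ`: finitely
supported exponent functions (index `0` stands for node `1`, index `1` for node `2`). -/
abbrev MonC2 : Type := (Fin 2 × ℤ) →₀ ℤ

/-- The monomials `A_{i,q^l}` of type `C₂`:
`A_{1,q^l} = Y_{1,q^{l−1}} Y_{1,q^{l+1}} Y_{2,q^l}^{−1}` and
`A_{2,q^l} = Y_{2,q^{l−1}} Y_{2,q^{l+1}} Y_{1,q^l}^{−2}`. -/
noncomputable def AC2 (i : Fin 2) (l : ℤ) : MonC2 :=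
  if i = 0 then
    Finsupp.single ((0 : Fin 2), l - 1) 1 + Finsupp.single ((0 : Fin 2), l + 1) 1
      + Finsupp.single ((1 : Fin 2), l) (-1)
  else
    Finsupp.single ((1 : Fin 2), l - 1) 1 + Finsupp.single ((1 : Fin 2), l + 1) 1
      + Finsupp.single ((0 : Fin 2), l) (-2)

/-- `φ_{i,L}(m) = Σ_{l ≤ L} u_{i,l}(m)`. -/
noncomputable def phiL (i : Fin 2) (L : ℤ) (m : MonC2) : ℤ :=
  ∑ p ∈ m.support, if p.1 = i ∧ p.2 ≤ L then m p else 0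

/-- `φ_i(m) = max{φ_{i,L}(m) : L ∈ ℤ}`. -/
noncomputable def phiC (i : Fin 2) (m : MonC2) : ℤ := sSup (Set.range fun L => phiL i L m)

/-- `ε_{i,L}(m) = −Σ_{l ≥ L} u_{i,l}(m)`. -/
noncomputable def epsL (i : Fin 2) (L : ℤ) (m : MonC2) : ℤ :=
  -∑ p ∈ m.support, if p.1 = i ∧ L ≤ p.2 then m p else 0

/-- `ε_i(m) = max{ε_{i,L}(m) : L ∈ ℤ}`. -/
noncomputable def epsC (i : Fin 2) (m : MonC2) : ℤ := sSup (Set.range fun L => epsL i L m)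

/-- `q_i(m) = min{L : φ_{i,L}(m) = φ_i(m)}`. -/
noncomputable def qC (i : Fin 2) (m : MonC2) : ℤ := sInf {L | phiL i L m = phiC i m}

/-- `p_i(m) = max{L : ε_{i,L}(m) = ε_i(m)}`. -/
noncomputable def pC (i : Fin 2) (m : MonC2) : ℤ := sSup {L | epsL i L m = epsC i m}

/-- The Kashiwara operator `f̃_i`: `0` (i.e. `none`) if `φ_i(m) = 0`, and
`m·A_{i,q^{q_i(m)+1}}^{−1}` if `φ_i(m) > 0`. -/
noncomputable def ftil (i : Fin 2) (m : MonC2) : Option MonC2 :=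
  if 0 < phiC i m then some (m - AC2 i (qC i m + 1)) else none

/-- The Kashiwara operator `ẽ_i`: `0` (i.e. `none`) if `ε_i(m) = 0`, and
`m·A_{i,q^{p_i(m)−1}}` if `ε_i(m) > 0`. -/
noncomputable def etil (i : Fin 2) (m : MonC2) : Option MonC2 :=
  if 0 < epsC i m then some (m + AC2 i (pC i m - 1)) else none

/-- A set of monomials is closed under the Kashiwara operators `ẽ_i, f̃_i`. -/
def crystClosed (S : Set MonC2) : Prop :=
  ∀ m ∈ S, ∀ i : Fin 2,
    (∀ m', etil i m = some m' → m' ∈ S) ∧ (∀ m', ftil i m = some m' → m' ∈ S)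

/-- The five-element set
`{Y_{2,1}, Y_{2,q²}^{−1}Y_{1,q}², Y_{1,q}Y_{1,q³}^{−1}, Y_{1,q³}^{−2}Y_{2,q²}, Y_{2,q⁴}^{−1}}`. -/
noncomputable def crysT : Set MonC2 :=
  { Finsupp.single ((1 : Fin 2), 0) 1,
    Finsupp.single ((1 : Fin 2), 2) (-1) + Finsupp.single ((0 : Fin 2), 1) 2,
    Finsupp.single ((0 : Fin 2), 1) 1 + Finsupp.single ((0 : Fin 2), 3) (-1),
    Finsupp.single ((0 : Fin 2), 3) (-2) + Finsupp.single ((1 : Fin 2), 2) 1,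
    Finsupp.single ((1 : Fin 2), 4) (-1) }

/-! ### Auxiliary lemmas -/

noncomputable def M1 : MonC2 := Finsupp.single ((1 : Fin 2), 0) 1
noncomputable def M2 : MonC2 :=
  Finsupp.single ((1 : Fin 2), 2) (-1) + Finsupp.single ((0 : Fin 2), 1) 2
noncomputable def M3 : MonC2 :=
  Finsupp.single ((0 : Fin 2), 1) 1 + Finsupp.single ((0 : Fin 2), 3) (-1)
noncomputable def M4 : MonC2 :=
  Finsupp.single ((0 : Fin 2), 3) (-2) + Finsupp.single ((1 : Fin 2), 2) 1
noncomputable def M5 : MonC2 := Finsupp.single ((1 : Fin 2), 4) (-1)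

lemma phiL_def' (i : Fin 2) (L : ℤ) (m : MonC2) :
    phiL i L m = m.sum (fun p a => if p.1 = i ∧ p.2 ≤ L then a else 0) := rfl

lemma phiL_single (i : Fin 2) (L : ℤ) (p : Fin 2 × ℤ) (a : ℤ) :
    phiL i L (Finsupp.single p a) = if p.1 = i ∧ p.2 ≤ L then a else 0 := by
  rw [phiL_def']; exact Finsupp.sum_single_index (by split <;> rfl)

lemma phiL_add (i : Fin 2) (L : ℤ) (m m' : MonC2) :
    phiL i L (m + m') = phiL i L m + phiL i L m' := by
  rw [phiL_def', phiL_def', phiL_def']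
  exact Finsupp.sum_add_index' (fun p => by split <;> rfl) (fun p a b => by split <;> simp)

lemma phiL_neg (i : Fin 2) (L : ℤ) (m : MonC2) : phiL i L (-m) = -phiL i L m := by
  unfold phiL
  rw [Finsupp.support_neg, ← Finset.sum_neg_distrib]
  refine Finset.sum_congr rfl fun p _ => ?_
  split <;> simp

lemma epsL_def' (i : Fin 2) (L : ℤ) (m : MonC2) :
    epsL i L m = -m.sum (fun p a => if p.1 = i ∧ L ≤ p.2 then a else 0) := rfl

lemma epsL_single (i : Fin 2) (L : ℤ) (p : Fin 2 × ℤ) (a : ℤ) :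
    epsL i L (Finsupp.single p a) = -if p.1 = i ∧ L ≤ p.2 then a else 0 := by
  rw [epsL_def', Finsupp.sum_single_index (by split <;> rfl)]

lemma epsL_add (i : Fin 2) (L : ℤ) (m m' : MonC2) :
    epsL i L (m + m') = epsL i L m + epsL i L m' := by
  rw [epsL_def', epsL_def', epsL_def',
    Finsupp.sum_add_index' (fun p => by split <;> rfl) (fun p a b => by split <;> simp)]
  ring

lemma epsL_neg (i : Fin 2) (L : ℤ) (m : MonC2) : epsL i L (-m) = -epsL i L m := by
  unfold epsL
  rw [Finsupp.support_neg, neg_inj, ← Finset.sum_neg_distrib]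
  refine Finset.sum_congr rfl fun p _ => ?_
  split <;> simp

lemma sSup_range_int {f : ℤ → ℤ} {v : ℤ} (h1 : ∀ L, f L ≤ v) (h2 : ∃ L, f L = v) :
    sSup (Set.range f) = v := by
  obtain ⟨L0, hL0⟩ := h2
  refine le_antisymm (csSup_le (Set.range_nonempty _) ?_) ?_
  · rintro x ⟨L, rfl⟩; exact h1 L
  · exact hL0 ▸ le_csSup ⟨v, by rintro x ⟨L, rfl⟩; exact h1 L⟩ ⟨L0, rfl⟩

lemma sInf_set_int {P : ℤ → Prop} {v : ℤ} (hv : P v) (hlb : ∀ L, P L → v ≤ L) :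
    sInf {L | P L} = v :=
  le_antisymm (csInf_le ⟨v, fun _ hx => hlb _ hx⟩ hv) (le_csInf ⟨v, hv⟩ hlb)

lemma sSup_set_int {P : ℤ → Prop} {v : ℤ} (hv : P v) (hub : ∀ L, P L → L ≤ v) :
    sSup {L | P L} = v :=
  le_antisymm (csSup_le ⟨v, hv⟩ hub) (le_csSup ⟨v, fun _ hx => hub _ hx⟩ hv)

/-! ### phiL / epsL on the five monomials -/

lemma phiL_M1_0 (L : ℤ) : phiL 0 L M1 = 0 := by simp [M1, phiL_single]
lemma phiL_M1_1 (L : ℤ) : phiL 1 L M1 = if 0 ≤ L then 1 else 0 := by simp [M1, phiL_single]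
lemma epsL_M1_0 (L : ℤ) : epsL 0 L M1 = 0 := by simp [M1, epsL_single]
lemma epsL_M1_1 (L : ℤ) : epsL 1 L M1 = if L ≤ 0 then -1 else 0 := by
  simp [M1, epsL_single]; split <;> simp

lemma phiL_M2_0 (L : ℤ) : phiL 0 L M2 = if 1 ≤ L then 2 else 0 := by
  simp [M2, phiL_add, phiL_single, phiL_neg]
lemma phiL_M2_1 (L : ℤ) : phiL 1 L M2 = if 2 ≤ L then -1 else 0 := by
  simp [M2, phiL_add, phiL_single, phiL_neg]; split <;> simp
lemma epsL_M2_0 (L : ℤ) : epsL 0 L M2 = if L ≤ 1 then -2 else 0 := by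
  simp [M2, epsL_add, epsL_single, epsL_neg]; split <;> simp
lemma epsL_M2_1 (L : ℤ) : epsL 1 L M2 = if L ≤ 2 then 1 else 0 := by
  simp [M2, epsL_add, epsL_single, epsL_neg]

lemma phiL_M3_0 (L : ℤ) :
    phiL 0 L M3 = (if 1 ≤ L then 1 else 0) + (if 3 ≤ L then -1 else 0) := by
  simp [M3, phiL_add, phiL_single, phiL_neg]; split_ifs <;> norm_num
lemma phiL_M3_1 (L : ℤ) : phiL 1 L M3 = 0 := by
  simp [M3, phiL_add, phiL_single, phiL_neg]
lemma epsL_M3_0 (L : ℤ) :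
    epsL 0 L M3 = (if L ≤ 1 then -1 else 0) + (if L ≤ 3 then 1 else 0) := by
  simp [M3, epsL_add, epsL_single, epsL_neg]; split_ifs <;> norm_num
lemma epsL_M3_1 (L : ℤ) : epsL 1 L M3 = 0 := by
  simp [M3, epsL_add, epsL_single, epsL_neg]

lemma phiL_M4_0 (L : ℤ) : phiL 0 L M4 = if 3 ≤ L then -2 else 0 := by
  simp [M4, phiL_add, phiL_single, phiL_neg]; split <;> simp
lemma phiL_M4_1 (L : ℤ) : phiL 1 L M4 = if 2 ≤ L then 1 else 0 := by
  simp [M4, phiL_add, phiL_single, phiL_neg]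
lemma epsL_M4_0 (L : ℤ) : epsL 0 L M4 = if L ≤ 3 then 2 else 0 := by
  simp [M4, epsL_add, epsL_single, epsL_neg]
lemma epsL_M4_1 (L : ℤ) : epsL 1 L M4 = if L ≤ 2 then -1 else 0 := by
  simp [M4, epsL_add, epsL_single, epsL_neg]; split <;> simp

lemma phiL_M5_0 (L : ℤ) : phiL 0 L M5 = 0 := by simp [M5, phiL_single, phiL_neg]
lemma phiL_M5_1 (L : ℤ) : phiL 1 L M5 = if 4 ≤ L then -1 else 0 := by
  simp [M5, phiL_single, phiL_neg]; split <;> simp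
lemma epsL_M5_0 (L : ℤ) : epsL 0 L M5 = 0 := by simp [M5, epsL_single, epsL_neg]
lemma epsL_M5_1 (L : ℤ) : epsL 1 L M5 = if L ≤ 4 then 1 else 0 := by
  simp [M5, epsL_single, epsL_neg]

/-! ### phiC / epsC / qC / pC values -/

lemma phiC_M1_0 : phiC 0 M1 = 0 :=
  sSup_range_int (fun L => by simp [phiL_M1_0]) ⟨0, by simp [phiL_M1_0]⟩
lemma phiC_M1_1 : phiC 1 M1 = 1 :=
  sSup_range_int (fun L => by rw [phiL_M1_1]; split <;> omega)
    ⟨0, by rw [phiL_M1_1]; norm_num⟩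
lemma epsC_M1_0 : epsC 0 M1 = 0 :=
  sSup_range_int (fun L => by simp [epsL_M1_0]) ⟨0, by simp [epsL_M1_0]⟩
lemma epsC_M1_1 : epsC 1 M1 = 0 :=
  sSup_range_int (fun L => by rw [epsL_M1_1]; split <;> omega)
    ⟨1, by rw [epsL_M1_1]; norm_num⟩
lemma qC_M1_1 : qC 1 M1 = 0 := by
  unfold qC
  rw [phiC_M1_1]
  exact sInf_set_int (by rw [phiL_M1_1]; norm_num)
    (fun L hL => by rw [phiL_M1_1] at hL; by_contra h; simp [show ¬(0:ℤ) ≤ L by omega] at hL)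

lemma phiC_M2_0 : phiC 0 M2 = 2 :=
  sSup_range_int (fun L => by rw [phiL_M2_0]; split <;> omega)
    ⟨1, by rw [phiL_M2_0]; norm_num⟩
lemma phiC_M2_1 : phiC 1 M2 = 0 :=
  sSup_range_int (fun L => by rw [phiL_M2_1]; split <;> omega)
    ⟨0, by rw [phiL_M2_1]; norm_num⟩
lemma epsC_M2_0 : epsC 0 M2 = 0 :=
  sSup_range_int (fun L => by rw [epsL_M2_0]; split <;> omega)
    ⟨2, by rw [epsL_M2_0]; norm_num⟩
lemma epsC_M2_1 : epsC 1 M2 = 1 :=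
  sSup_range_int (fun L => by rw [epsL_M2_1]; split <;> omega)
    ⟨2, by rw [epsL_M2_1]; norm_num⟩
lemma qC_M2_0 : qC 0 M2 = 1 := by
  unfold qC
  rw [phiC_M2_0]
  exact sInf_set_int (by rw [phiL_M2_0]; norm_num)
    (fun L hL => by rw [phiL_M2_0] at hL; by_contra h; simp [show ¬(1:ℤ) ≤ L by omega] at hL)
lemma pC_M2_1 : pC 1 M2 = 2 := by
  unfold pC
  rw [epsC_M2_1]
  exact sSup_set_int (by rw [epsL_M2_1]; norm_num)
    (fun L hL => by rw [epsL_M2_1] at hL; by_contra h; simp [show ¬L ≤ (2:ℤ) by omega] at hL)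

lemma phiC_M3_0 : phiC 0 M3 = 1 :=
  sSup_range_int (fun L => by rw [phiL_M3_0]; split <;> split <;> omega)
    ⟨1, by rw [phiL_M3_0]; norm_num⟩
lemma phiC_M3_1 : phiC 1 M3 = 0 :=
  sSup_range_int (fun L => by simp [phiL_M3_1]) ⟨0, by simp [phiL_M3_1]⟩
lemma epsC_M3_0 : epsC 0 M3 = 1 :=
  sSup_range_int (fun L => by rw [epsL_M3_0]; split <;> split <;> omega)
    ⟨3, by rw [epsL_M3_0]; norm_num⟩
lemma epsC_M3_1 : epsC 1 M3 = 0 :=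
  sSup_range_int (fun L => by simp [epsL_M3_1]) ⟨0, by simp [epsL_M3_1]⟩
lemma qC_M3_0 : qC 0 M3 = 1 := by
  unfold qC
  rw [phiC_M3_0]
  refine sInf_set_int (by rw [phiL_M3_0]; norm_num) (fun L hL => ?_)
  rw [phiL_M3_0] at hL
  by_contra h
  rw [if_neg (by omega), if_neg (by omega)] at hL
  omega
lemma pC_M3_0 : pC 0 M3 = 3 := by
  unfold pC
  rw [epsC_M3_0]
  refine sSup_set_int (by rw [epsL_M3_0]; norm_num) (fun L hL => ?_)
  rw [epsL_M3_0] at hL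
  by_contra h
  rw [if_neg (by omega), if_neg (by omega)] at hL
  omega

lemma phiC_M4_0 : phiC 0 M4 = 0 :=
  sSup_range_int (fun L => by rw [phiL_M4_0]; split <;> omega)
    ⟨0, by rw [phiL_M4_0]; norm_num⟩
lemma phiC_M4_1 : phiC 1 M4 = 1 :=
  sSup_range_int (fun L => by rw [phiL_M4_1]; split <;> omega)
    ⟨2, by rw [phiL_M4_1]; norm_num⟩
lemma epsC_M4_0 : epsC 0 M4 = 2 :=
  sSup_range_int (fun L => by rw [epsL_M4_0]; split <;> omega)
    ⟨3, by rw [epsL_M4_0]; norm_num⟩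
lemma epsC_M4_1 : epsC 1 M4 = 0 :=
  sSup_range_int (fun L => by rw [epsL_M4_1]; split <;> omega)
    ⟨3, by rw [epsL_M4_1]; norm_num⟩
lemma qC_M4_1 : qC 1 M4 = 2 := by
  unfold qC
  rw [phiC_M4_1]
  exact sInf_set_int (by rw [phiL_M4_1]; norm_num)
    (fun L hL => by rw [phiL_M4_1] at hL; by_contra h; simp [show ¬(2:ℤ) ≤ L by omega] at hL)
lemma pC_M4_0 : pC 0 M4 = 3 := by
  unfold pC
  rw [epsC_M4_0]
  exact sSup_set_int (by rw [epsL_M4_0]; norm_num)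
    (fun L hL => by rw [epsL_M4_0] at hL; by_contra h; simp [show ¬L ≤ (3:ℤ) by omega] at hL)

lemma phiC_M5_0 : phiC 0 M5 = 0 :=
  sSup_range_int (fun L => by simp [phiL_M5_0]) ⟨0, by simp [phiL_M5_0]⟩
lemma phiC_M5_1 : phiC 1 M5 = 0 :=
  sSup_range_int (fun L => by rw [phiL_M5_1]; split <;> omega)
    ⟨0, by rw [phiL_M5_1]; norm_num⟩
lemma epsC_M5_0 : epsC 0 M5 = 0 :=
  sSup_range_int (fun L => by simp [epsL_M5_0]) ⟨0, by simp [epsL_M5_0]⟩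
lemma epsC_M5_1 : epsC 1 M5 = 1 :=
  sSup_range_int (fun L => by rw [epsL_M5_1]; split <;> omega)
    ⟨4, by rw [epsL_M5_1]; norm_num⟩
lemma pC_M5_1 : pC 1 M5 = 4 := by
  unfold pC
  rw [epsC_M5_1]
  exact sSup_set_int (by rw [epsL_M5_1]; norm_num)
    (fun L hL => by rw [epsL_M5_1] at hL; by_contra h; simp [show ¬L ≤ (4:ℤ) by omega] at hL)

/-! ### Operator values -/

lemma ftil_M1_0 : ftil 0 M1 = none := by simp [ftil, phiC_M1_0]
lemma etil_M1_0 : etil 0 M1 = none := by simp [etil, epsC_M1_0]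
lemma etil_M1_1 : etil 1 M1 = none := by simp [etil, epsC_M1_1]
lemma ftil_M2_1 : ftil 1 M2 = none := by simp [ftil, phiC_M2_1]
lemma etil_M2_0 : etil 0 M2 = none := by simp [etil, epsC_M2_0]
lemma ftil_M3_1 : ftil 1 M3 = none := by simp [ftil, phiC_M3_1]
lemma etil_M3_1 : etil 1 M3 = none := by simp [etil, epsC_M3_1]
lemma ftil_M4_0 : ftil 0 M4 = none := by simp [ftil, phiC_M4_0]
lemma etil_M4_1 : etil 1 M4 = none := by simp [etil, epsC_M4_1]
lemma ftil_M5_0 : ftil 0 M5 = none := by simp [ftil, phiC_M5_0]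
lemma ftil_M5_1 : ftil 1 M5 = none := by simp [ftil, phiC_M5_1]
lemma etil_M5_0 : etil 0 M5 = none := by simp [etil, epsC_M5_0]

lemma ftil_M1_1 : ftil 1 M1 = some M2 := by
  rw [ftil, if_pos (by rw [phiC_M1_1]; norm_num), qC_M1_1]
  congr 1
  ext x
  obtain ⟨j, l⟩ := x
  fin_cases j <;>
    simp [M1, M2, AC2, Finsupp.single_apply, Prod.mk.injEq] <;> split_ifs <;> omega

lemma ftil_M2_0 : ftil 0 M2 = some M3 := by
  rw [ftil, if_pos (by rw [phiC_M2_0]; norm_num), qC_M2_0]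
  congr 1
  ext x
  obtain ⟨j, l⟩ := x
  fin_cases j <;>
    simp [M2, M3, AC2, Finsupp.single_apply, Prod.mk.injEq] <;> split_ifs <;> omega

lemma etil_M2_1 : etil 1 M2 = some M1 := by
  rw [etil, if_pos (by rw [epsC_M2_1]; norm_num), pC_M2_1]
  congr 1
  ext x
  obtain ⟨j, l⟩ := x
  fin_cases j <;>
    simp [M1, M2, AC2, Finsupp.single_apply, Prod.mk.injEq] <;> split_ifs <;> omega

lemma ftil_M3_0 : ftil 0 M3 = some M4 := by
  rw [ftil, if_pos (by rw [phiC_M3_0]; norm_num), qC_M3_0]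
  congr 1
  ext x
  obtain ⟨j, l⟩ := x
  fin_cases j <;>
    simp [M3, M4, AC2, Finsupp.single_apply, Prod.mk.injEq] <;> split_ifs <;> omega

lemma etil_M3_0 : etil 0 M3 = some M2 := by
  rw [etil, if_pos (by rw [epsC_M3_0]; norm_num), pC_M3_0]
  congr 1
  ext x
  obtain ⟨j, l⟩ := x
  fin_cases j <;>
    simp [M2, M3, AC2, Finsupp.single_apply, Prod.mk.injEq] <;> split_ifs <;> omega

lemma ftil_M4_1 : ftil 1 M4 = some M5 := by
  rw [ftil, if_pos (by rw [phiC_M4_1]; norm_num), qC_M4_1]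
  congr 1
  ext x
  obtain ⟨j, l⟩ := x
  fin_cases j <;>
    simp [M4, M5, AC2, Finsupp.single_apply, Prod.mk.injEq] <;> split_ifs <;> omega

lemma etil_M4_0 : etil 0 M4 = some M3 := by
  rw [etil, if_pos (by rw [epsC_M4_0]; norm_num), pC_M4_0]
  congr 1
  ext x
  obtain ⟨j, l⟩ := x
  fin_cases j <;>
    simp [M3, M4, AC2, Finsupp.single_apply, Prod.mk.injEq] <;> split_ifs <;> omega

lemma etil_M5_1 : etil 1 M5 = some M4 := by
  rw [etil, if_pos (by rw [epsC_M5_1]; norm_num), pC_M5_1]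
  congr 1
  ext x
  obtain ⟨j, l⟩ := x
  fin_cases j <;>
    simp [M4, M5, AC2, Finsupp.single_apply, Prod.mk.injEq] <;> split_ifs <;> omega

lemma crysT_eq : crysT = {M1, M2, M3, M4, M5} := rfl

/-- The smallest set of monomials containing `Y_{2,q⁰}` and closed under
the Kashiwara operators `ẽ_1, ẽ_2, f̃_1, f̃_2` of type `C₂` is exactly the five-element set
`crysT` (the monomial crystal `M(Y_{2,1}) ≅ B(ω₂)`). -/
theorem stmt13 :
    (Finsupp.single ((1 : Fin 2), 0) 1 ∈ crysT ∧ crystClosed crysT) ∧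
      ∀ S : Set MonC2, Finsupp.single ((1 : Fin 2), 0) 1 ∈ S → crystClosed S →
        crysT ⊆ S := by
  have hM1 : M1 ∈ crysT := by rw [crysT_eq]; left; rfl
  have hM2 : M2 ∈ crysT := by rw [crysT_eq]; right; left; rfl
  have hM3 : M3 ∈ crysT := by rw [crysT_eq]; right; right; left; rfl
  have hM4 : M4 ∈ crysT := by rw [crysT_eq]; right; right; right; left; rfl
  have hM5 : M5 ∈ crysT := by rw [crysT_eq]; right; right; right; right; rfl
  refine ⟨⟨hM1, ?_⟩, ?_⟩
  · intro m hm i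
    rw [crysT_eq] at hm
    have hi : i = 0 ∨ i = 1 := by omega
    rcases hm with rfl | rfl | rfl | rfl | rfl <;> rcases hi with rfl | rfl <;>
      refine ⟨fun m' h => ?_, fun m' h => ?_⟩ <;>
      simp only [ftil_M1_0, ftil_M1_1, etil_M1_0, etil_M1_1,
        ftil_M2_0, ftil_M2_1, etil_M2_0, etil_M2_1,
        ftil_M3_0, ftil_M3_1, etil_M3_0, etil_M3_1,
        ftil_M4_0, ftil_M4_1, etil_M4_0, etil_M4_1,
        ftil_M5_0, ftil_M5_1, etil_M5_0, etil_M5_1,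
        Option.some.injEq, reduceCtorEq] at h <;>
      first
        | exact absurd h (by simp)
        | (subst h; assumption)
  · intro S hS1 hclosed
    have h1 : M1 ∈ S := hS1
    have h2 : M2 ∈ S := (hclosed M1 h1 1).2 M2 ftil_M1_1
    have h3 : M3 ∈ S := (hclosed M2 h2 0).2 M3 ftil_M2_0
    have h4 : M4 ∈ S := (hclosed M3 h3 0).2 M4 ftil_M3_0
    have h5 : M5 ∈ S := (hclosed M4 h4 1).2 M5 ftil_M4_1
    rw [crysT_eq]
    rintro m (rfl | rfl | rfl | rfl | rfl) <;> assumption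
end

section
/- Let A be an associative ℂ-algebra, let m ≥ 2, let x_1, …, x_m ∈ A, and fix indices a ≠ b in {1, …, m} such that x_a x_b = x_b x_a. Consider the element Φ = Σ_{τ ∈ S_m} (1/((w_{τ(1)} − w_{τ(2)})(w_{τ(2)} − w_{τ(3)}) ⋯ (w_{τ(m−1)} − w_{τ(m)}) · w_{τ(m)})) · x_{τ(1)} x_{τ(2)} ⋯ x_{τ(m)} of A ⊗_ℂ ℂ(w_1, …, w_m), the sum being over all permutations τ of {1, …, m}. Then Φ has no pole along the hyperplane w_a = w_b; precisely, Φ lies in A ⊗_ℂ 𝒪, where 𝒪 ⊂ ℂ(w_1, …, w_m) is the subring of rational functions expressible with denominator not divisible by w_a − w_b (the localization of ℂ[w_1, …, w_m] at the prime ideal generated by w_a − w_b). -/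
open scoped TensorProduct
set_option maxHeartbeats 1000000
set_option synthInstance.maxHeartbeats 400000

/-- The polynomial ring `ℂ[w_1, …, w_m]`. -/
abbrev PolyW (m : ℕ) : Type := MvPolynomial (Fin m) ℂ

/-- The field `ℂ(w_1, …, w_m)` of rational functions. -/
abbrev RatW (m : ℕ) : Type := FractionRing (PolyW m)

/-- The variable `w_i`, viewed inside `ℂ(w_1, …, w_m)`. -/
noncomputable def Wv {m : ℕ} (i : Fin m) : RatW m :=
  algebraMap (PolyW m) (RatW m) (MvPolynomial.X i)

/-- The denominator `(w_{τ(1)} − w_{τ(2)})(w_{τ(2)} − w_{τ(3)}) ⋯ (w_{τ(m−1)} − w_{τ(m)})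
· w_{τ(m)}` attached to a permutation `τ`. -/
noncomputable def betheDenom (m : ℕ) (hm : 2 ≤ m) (τ : Equiv.Perm (Fin m)) : RatW m :=
  (∏ j ∈ (Finset.range (m - 1)).attach,
      (Wv (τ ⟨j.1, by have := Finset.mem_range.mp j.2; omega⟩)
        - Wv (τ ⟨j.1 + 1, by have := Finset.mem_range.mp j.2; omega⟩)))
    * Wv (τ ⟨m - 1, by omega⟩)

/-- The universal Bethe vector
`Φ = Σ_{τ ∈ S_m} x_{τ(1)} x_{τ(2)} ⋯ x_{τ(m)} / ((w_{τ(1)} − w_{τ(2)}) ⋯ w_{τ(m)})`,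
as an element of `A ⊗_ℂ ℂ(w_1, …, w_m)`. -/
noncomputable def bethePhi {A : Type*} [Ring A] [Algebra ℂ A] (m : ℕ) (hm : 2 ≤ m)
    (x : Fin m → A) : A ⊗[ℂ] RatW m :=
  ∑ τ : Equiv.Perm (Fin m),
    (List.ofFn fun j : Fin m => x (τ j)).prod ⊗ₜ[ℂ] (betheDenom m hm τ)⁻¹

namespace S14
open MvPolynomial

variable {m : ℕ}

/-- `v τ j = X_{τ j}` for `j < m`, `0` otherwise. -/
noncomputable def vp (m : ℕ) (τ : Equiv.Perm (Fin m)) (j : ℕ) : PolyW m :=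
  if h : j < m then MvPolynomial.X (τ ⟨j, h⟩) else 0

noncomputable def Fp (m : ℕ) (τ : Equiv.Perm (Fin m)) (j : ℕ) : PolyW m :=
  vp m τ j - vp m τ (j + 1)

noncomputable def Dp (m : ℕ) (τ : Equiv.Perm (Fin m)) : PolyW m :=
  ∏ j ∈ Finset.range m, Fp m τ j

lemma vp_lt (τ : Equiv.Perm (Fin m)) (j : ℕ) (h : j < m) :
    vp m τ j = MvPolynomial.X (τ ⟨j, h⟩) := dif_pos h

lemma vp_ge (τ : Equiv.Perm (Fin m)) (j : ℕ) (h : ¬ j < m) : vp m τ j = 0 := dif_neg h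

lemma betheDenom_eq (hm : 2 ≤ m) (τ : Equiv.Perm (Fin m)) :
    betheDenom m hm τ = algebraMap (PolyW m) (RatW m) (Dp m τ) := by
  have hm1 : m - 1 + 1 = m := by omega
  have hsplit : ∏ j ∈ Finset.range m, Fp m τ j
      = (∏ j ∈ Finset.range (m-1), Fp m τ j) * Fp m τ (m-1) := by
    have := Finset.prod_range_succ (Fp m τ) (m-1)
    rwa [hm1] at this
  rw [Dp, hsplit, map_mul, map_prod]
  rw [betheDenom]
  congr 1
  · rw [← Finset.prod_attach (Finset.range (m-1)) (fun j => algebraMap (PolyW m) (RatW m) (Fp m τ j))]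
    refine Finset.prod_congr rfl ?_
    rintro ⟨j, hj⟩ -
    have hj' : j < m - 1 := Finset.mem_range.mp hj
    rw [Fp, vp_lt τ j (by omega), vp_lt τ (j+1) (by omega), map_sub]
    rfl
  · rw [Fp, vp_lt τ (m-1) (by omega), vp_ge τ (m-1+1) (by omega), sub_zero]
    rfl

/-- the substitution `w_b ↦ w_a`. -/
noncomputable def ev (m : ℕ) (a b : Fin m) : PolyW m →+* PolyW m :=
  (MvPolynomial.aeval (fun i : Fin m => MvPolynomial.X (R := ℂ) (if i = b then a else i))).toRingHom

lemma ev_X (a b i : Fin m) : ev m a b (MvPolynomial.X i) = MvPolynomial.X (if i = b then a else i) := by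
  simp [ev]

lemma ev_d_eq_zero (a b : Fin m) : ev m a b (MvPolynomial.X a - MvPolynomial.X b) = 0 := by
  rw [map_sub, ev_X, ev_X, if_pos rfl]
  by_cases h : a = b <;> simp [h]

lemma not_dvd_of_ev_ne (a b : Fin m) (q : PolyW m) (h : ev m a b q ≠ 0) :
    ¬ (MvPolynomial.X a - MvPolynomial.X b ∣ q) := by
  rintro ⟨c, rfl⟩
  rw [map_mul, ev_d_eq_zero, zero_mul] at h
  exact h rfl

lemma ev_X_sub_X_ne {a b : Fin m} (hab : a ≠ b) {c d : Fin m} (hcd : c ≠ d)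
    (h1 : ¬(c = a ∧ d = b)) (h2 : ¬(c = b ∧ d = a)) :
    ev m a b (MvPolynomial.X c - MvPolynomial.X d) ≠ 0 := by
  rw [map_sub, ev_X, ev_X]
  refine sub_ne_zero.mpr fun h => ?_
  have := MvPolynomial.X_injective (R := ℂ) h
  split_ifs at this with h3 h4 h4
  · exact hcd (h3.trans h4.symm)
  · exact h2 ⟨h3, this.symm⟩
  · exact h1 ⟨this, h4⟩
  · exact hcd this

lemma X_sub_X_ne {c d : Fin m} (h : c ≠ d) :
    (MvPolynomial.X c - MvPolynomial.X d : PolyW m) ≠ 0 :=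
  sub_ne_zero.mpr fun hx => h (MvPolynomial.X_injective hx)

lemma Fp_ne_zero (τ : Equiv.Perm (Fin m)) (j : ℕ) (hj : j < m) : Fp m τ j ≠ 0 := by
  by_cases h : j + 1 < m
  · rw [Fp, vp_lt τ j hj, vp_lt τ (j+1) h]
    exact X_sub_X_ne (fun he => by
      have := τ.injective he
      simp [Fin.ext_iff] at this)
  · rw [Fp, vp_lt τ j hj, vp_ge τ (j+1) h, sub_zero]
    exact MvPolynomial.X_ne_zero _

lemma Dp_ne_zero (τ : Equiv.Perm (Fin m)) : Dp m τ ≠ 0 :=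
  Finset.prod_ne_zero_iff.mpr fun j hj => Fp_ne_zero τ j (Finset.mem_range.mp hj)

lemma ev_Fp_ne (a b : Fin m) (hab : a ≠ b) (τ : Equiv.Perm (Fin m)) (j : ℕ) (hj : j < m)
    (h : ∀ (hj1 : j + 1 < m),
      ¬(τ ⟨j, hj⟩ = a ∧ τ ⟨j+1, hj1⟩ = b) ∧ ¬(τ ⟨j, hj⟩ = b ∧ τ ⟨j+1, hj1⟩ = a)) :
    ev m a b (Fp m τ j) ≠ 0 := by
  by_cases hj1 : j + 1 < m
  · rw [Fp, vp_lt τ j hj, vp_lt τ (j+1) hj1]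
    exact ev_X_sub_X_ne hab
      (fun he => by have := τ.injective he; simp [Fin.ext_iff] at this)
      (h hj1).1 (h hj1).2
  · rw [Fp, vp_lt τ j hj, vp_ge τ (j+1) hj1, sub_zero, ev_X]
    exact MvPolynomial.X_ne_zero _

/-- splitting the product at position `k ≥ 1`. -/
lemma prod_split_three {M : Type*} [CommMonoid M] (F : ℕ → M) (k m : ℕ)
    (hk : 1 ≤ k) (hkm : k + 1 < m) :
    ∏ j ∈ Finset.range m, F j =
      (∏ j ∈ Finset.Ico 0 (k-1), F j) *
        (F (k-1) * (F k * (F (k+1) * ∏ j ∈ Finset.Ico (k+2) m, F j))) := by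
  have h1 : k - 1 + 1 = k := by omega
  rw [Finset.range_eq_Ico,
    ← Finset.prod_Ico_consecutive F (Nat.zero_le (k-1)) (by omega : k - 1 ≤ m),
    ← Finset.prod_Ico_consecutive F (by omega : k - 1 ≤ k + 2) (by omega : k + 2 ≤ m)]
  have h2 : ∏ j ∈ Finset.Ico (k-1) (k+2), F j = F (k-1) * F k * F (k+1) := by
    rw [show k + 2 = (k+1) + 1 by ring, Finset.prod_Ico_succ_top (by omega),
      show k + 1 = k + 1 by rfl, Finset.prod_Ico_succ_top (by omega),
      show (Finset.Ico (k-1) k) = {k-1} by ext j; simp [Finset.mem_Ico]; omega,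
      Finset.prod_singleton]
  rw [h2]; simp [mul_assoc]

lemma prod_split_two {M : Type*} [CommMonoid M] (F : ℕ → M) (m : ℕ) (hm : 2 ≤ m) :
    ∏ j ∈ Finset.range m, F j = F 0 * (F 1 * ∏ j ∈ Finset.Ico 2 m, F j) := by
  rw [Finset.range_eq_Ico, ← Finset.prod_Ico_consecutive F (Nat.zero_le 2) hm,
    show (Finset.Ico 0 2 : Finset ℕ) = {0, 1} by rfl]
  rw [Finset.prod_insert (by simp), Finset.prod_singleton, mul_assoc]

lemma pair_inv {K : Type*} [Field K] {α β n q : K} (hα : α ≠ 0) (hβ : β ≠ 0) (hq : q ≠ 0)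
    (h : (α + β) * q = n * (α * β)) : α⁻¹ + β⁻¹ = n / q := by
  field_simp
  linear_combination h

lemma ofFn_prod_swap {A : Type*} [Monoid A] :
    ∀ (p n : ℕ) (f g : Fin n → A) (hp : p + 1 < n),
    (∀ i : Fin n, (i : ℕ) ≠ p → (i : ℕ) ≠ p + 1 → f i = g i) →
    f ⟨p, by omega⟩ * f ⟨p+1, hp⟩ = g ⟨p, by omega⟩ * g ⟨p+1, hp⟩ →
    (List.ofFn f).prod = (List.ofFn g).prod := by
  intro p
  induction p with
  | zero =>
    intro n f g hp hfg hmid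
    match n, hp with
    | (n+2), hp =>
      have hrest : (fun i : Fin n => f i.succ.succ) = (fun i : Fin n => g i.succ.succ) := by
        funext i
        apply hfg <;> · simp [Fin.ext_iff]
      simp only [List.ofFn_succ, List.prod_cons]
      have h0 : (0 : Fin (n+2)) = ⟨0, by omega⟩ := rfl
      have h1 : (Fin.succ (0 : Fin (n+1))) = (⟨0+1, by omega⟩ : Fin (n+2)) := rfl
      rw [← mul_assoc, ← mul_assoc, h0, h1, hmid, hrest]
  | succ p ih =>
    intro n f g hp hfg hmid
    match n, hp with
    | (n+1), hp =>
      simp only [List.ofFn_succ, List.prod_cons]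
      have h0 : f 0 = g 0 := hfg 0 (by simp) (by simp)
      rw [h0]
      congr 1
      refine ih n (fun i => f i.succ) (fun i => g i.succ) (by omega)
        (fun i h1 h2 => hfg i.succ (by simp [Fin.ext_iff]; omega) (by simp [Fin.ext_iff]; omega))
        ?_
      show f (Fin.succ ⟨p, by omega⟩) * f (Fin.succ ⟨p+1, by omega⟩)
        = g (Fin.succ ⟨p, by omega⟩) * g (Fin.succ ⟨p+1, by omega⟩)
      have e1 : (Fin.succ (⟨p, by omega⟩ : Fin n) : Fin (n+1)) = ⟨p+1, by omega⟩ := rfl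
      have e2 : (Fin.succ (⟨p+1, by omega⟩ : Fin n) : Fin (n+1)) = ⟨p+1+1, by omega⟩ := rfl
      rw [e1, e2]
      exact hmid

lemma apply_ne {a : Fin m} (τ : Equiv.Perm (Fin m)) {j k : ℕ} (hj : j < m) (hk : k < m)
    (hjk : j ≠ k) (h : τ ⟨k, hk⟩ = a) : τ ⟨j, hj⟩ ≠ a := fun he => by
  have := τ.injective (he.trans h.symm)
  simp only [Fin.mk.injEq] at this
  exact hjk this

lemma ev_Fp_ne' (a b : Fin m) (hab : a ≠ b) (τ : Equiv.Perm (Fin m)) (k : ℕ) (hkm : k + 1 < m)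
    (hτk : τ ⟨k, by omega⟩ = a) (hτk1 : τ ⟨k+1, hkm⟩ = b)
    (j : ℕ) (hj : j < m) (hjk : j ≠ k) (hjk1 : j ≠ k + 1) :
    ev m a b (Fp m τ j) ≠ 0 := by
  refine ev_Fp_ne a b hab τ j hj fun hj1 => ⟨?_, ?_⟩
  · rintro ⟨h1, -⟩
    exact apply_ne τ hj (by omega) hjk hτk h1
  · rintro ⟨h1, -⟩
    exact apply_ne τ hj hkm hjk1 hτk1 h1

lemma pair_good (a b : Fin m) (hab : a ≠ b) (τ : Equiv.Perm (Fin m))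
    (k : ℕ) (hkm : k + 1 < m) (hτk : τ ⟨k, by omega⟩ = a) (hτk1 : τ ⟨k+1, hkm⟩ = b) :
    ∃ N Q : PolyW m, ev m a b Q ≠ 0 ∧
      (algebraMap (PolyW m) (RatW m) (Dp m τ))⁻¹
        + (algebraMap (PolyW m) (RatW m) (Dp m (Equiv.swap a b * τ)))⁻¹
      = algebraMap (PolyW m) (RatW m) N / algebraMap (PolyW m) (RatW m) Q := by
  set σ : Equiv.Perm (Fin m) := Equiv.swap a b with hσ
  -- values of στ at k, k+1
  have hστk : (σ * τ) ⟨k, by omega⟩ = b := by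
    simp [hσ, Equiv.Perm.mul_apply, hτk]
  have hστk1 : (σ * τ) ⟨k+1, hkm⟩ = a := by
    simp [hσ, Equiv.Perm.mul_apply, hτk1]
  -- vp of στ agrees with vp of τ away from k, k+1
  have hswap : ∀ j : ℕ, j ≠ k → j ≠ k + 1 → vp m (σ * τ) j = vp m τ j := by
    intro j hjk hjk1
    by_cases hj : j < m
    · rw [vp_lt _ j hj, vp_lt _ j hj]
      show MvPolynomial.X (σ (τ ⟨j, hj⟩)) = _
      rw [Equiv.swap_apply_of_ne_of_ne (apply_ne τ hj (by omega) hjk hτk)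
        (apply_ne τ hj hkm hjk1 hτk1)]
    · rw [vp_ge _ j hj, vp_ge _ j hj]
  have hvστk : vp m (σ * τ) k = MvPolynomial.X b := by
    rw [vp_lt _ k (by omega), hστk]
  have hvστk1 : vp m (σ * τ) (k+1) = MvPolynomial.X a := by
    rw [vp_lt _ (k+1) hkm, hστk1]
  have hvk : vp m τ k = MvPolynomial.X a := by rw [vp_lt τ k (by omega), hτk]
  have hvk1 : vp m τ (k+1) = MvPolynomial.X b := by rw [vp_lt τ (k+1) hkm, hτk1]
  -- nonvanishing of ev on the surviving factors
  have hev_qv_a : ev m a b (MvPolynomial.X a - vp m τ (k+2)) ≠ 0 := by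
    by_cases h2 : k + 2 < m
    · rw [vp_lt τ (k+2) h2]
      refine ev_X_sub_X_ne hab ?_ ?_ ?_
      · exact (apply_ne τ h2 (by omega) (by omega) hτk).symm
      · rintro ⟨-, h⟩; exact apply_ne τ h2 hkm (by omega) hτk1 h
      · rintro ⟨h, -⟩; exact hab h
    · rw [vp_ge τ (k+2) h2, sub_zero, ev_X]
      simp only [if_neg hab]
      exact MvPolynomial.X_ne_zero _
  have hev_b_qv : ev m a b (MvPolynomial.X b - vp m τ (k+2)) ≠ 0 := by
    by_cases h2 : k + 2 < m
    · rw [vp_lt τ (k+2) h2]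
      refine ev_X_sub_X_ne hab ?_ ?_ ?_
      · exact (apply_ne τ h2 hkm (by omega) hτk1).symm
      · rintro ⟨h, -⟩; exact hab h.symm
      · rintro ⟨-, h⟩; exact apply_ne τ h2 (by omega) (by omega) hτk h
    · rw [vp_ge τ (k+2) h2, sub_zero, ev_X]
      simp only [if_pos rfl]
      exact MvPolynomial.X_ne_zero _
  -- now split on whether k = 0
  rcases Nat.eq_zero_or_pos k with hk0 | hk1
  · -- k = 0
    subst hk0
    set S : PolyW m := ∏ j ∈ Finset.Ico 2 m, Fp m τ j with hS
    set qv : PolyW m := vp m τ 2 with hqv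
    have hF0 : Fp m τ 0 = MvPolynomial.X a - MvPolynomial.X b := by
      rw [Fp, hvk, hvk1]
    have hF1 : Fp m τ 1 = MvPolynomial.X b - qv := by
      rw [Fp, hvk1, hqv]
    have hF0' : Fp m (σ * τ) 0 = MvPolynomial.X b - MvPolynomial.X a := by
      rw [Fp, hvστk, hvστk1]
    have hF1' : Fp m (σ * τ) 1 = MvPolynomial.X a - qv := by
      rw [Fp, hvστk1, hqv, hswap 2 (by omega) (by omega)]
    have hS' : ∏ j ∈ Finset.Ico 2 m, Fp m (σ * τ) j = S := by
      refine Finset.prod_congr rfl fun j hj => ?_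
      obtain ⟨hj1, -⟩ := Finset.mem_Ico.mp hj
      rw [Fp, Fp, hswap j (by omega) (by omega), hswap (j+1) (by omega) (by omega)]
    have hDτ : Dp m τ = (MvPolynomial.X a - MvPolynomial.X b) * ((MvPolynomial.X b - qv) * S) := by
      rw [Dp, prod_split_two (Fp m τ) m (by omega), hF0, hF1]
    have hDστ : Dp m (σ * τ) = (MvPolynomial.X b - MvPolynomial.X a)
        * ((MvPolynomial.X a - qv) * S) := by
      rw [Dp, prod_split_two (Fp m (σ * τ)) m (by omega), hF0', hF1', hS']
    have hevS : ev m a b S ≠ 0 := by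
      rw [hS, map_prod]
      refine Finset.prod_ne_zero_iff.mpr fun j hj => ?_
      obtain ⟨hj1, hj2⟩ := Finset.mem_Ico.mp hj
      exact ev_Fp_ne' a b hab τ 0 hkm hτk hτk1 j hj2 (by omega) (by omega)
    refine ⟨1, S * ((MvPolynomial.X b - qv) * (MvPolynomial.X a - qv)), ?_, ?_⟩
    · rw [map_mul, map_mul]
      exact mul_ne_zero hevS (mul_ne_zero hev_b_qv hev_qv_a)
    · have hQ0 : (S * ((MvPolynomial.X b - qv) * (MvPolynomial.X a - qv))) ≠ 0 := by
        intro h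
        apply mul_ne_zero hevS (mul_ne_zero hev_b_qv hev_qv_a)
        rw [← map_mul, ← map_mul, h, map_zero]
      refine pair_inv ?_ ?_ ?_ ?_
      · exact (map_ne_zero_iff _ (IsFractionRing.injective (PolyW m) (RatW m))).mpr (Dp_ne_zero τ)
      · exact (map_ne_zero_iff _ (IsFractionRing.injective (PolyW m) (RatW m))).mpr
          (Dp_ne_zero (σ * τ))
      · exact (map_ne_zero_iff _ (IsFractionRing.injective (PolyW m) (RatW m))).mpr hQ0
      · rw [← map_add, ← map_mul, ← map_mul, ← map_mul]
        congr 1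
        rw [hDτ, hDστ]; ring
  · -- k ≥ 1
    set P : PolyW m := ∏ j ∈ Finset.Ico 0 (k-1), Fp m τ j with hP
    set S : PolyW m := ∏ j ∈ Finset.Ico (k+2) m, Fp m τ j with hS
    set pv : PolyW m := vp m τ (k-1) with hpv
    set qv : PolyW m := vp m τ (k+2) with hqv
    have hk1k : k - 1 + 1 = k := by omega
    have hFkm : Fp m τ (k-1) = pv - MvPolynomial.X a := by
      rw [Fp, hk1k, hvk, hpv]
    have hFk : Fp m τ k = MvPolynomial.X a - MvPolynomial.X b := by rw [Fp, hvk, hvk1]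
    have hFk1 : Fp m τ (k+1) = MvPolynomial.X b - qv := by rw [Fp, hvk1, hqv]
    have hFkm' : Fp m (σ * τ) (k-1) = pv - MvPolynomial.X b := by
      rw [Fp, hk1k, hvστk, hpv, hswap (k-1) (by omega) (by omega)]
    have hFk' : Fp m (σ * τ) k = MvPolynomial.X b - MvPolynomial.X a := by
      rw [Fp, hvστk, hvστk1]
    have hFk1' : Fp m (σ * τ) (k+1) = MvPolynomial.X a - qv := by
      rw [Fp, hvστk1, hqv, hswap (k+2) (by omega) (by omega)]
    have hP' : ∏ j ∈ Finset.Ico 0 (k-1), Fp m (σ * τ) j = P := by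
      refine Finset.prod_congr rfl fun j hj => ?_
      obtain ⟨-, hj2⟩ := Finset.mem_Ico.mp hj
      rw [Fp, Fp, hswap j (by omega) (by omega), hswap (j+1) (by omega) (by omega)]
    have hS' : ∏ j ∈ Finset.Ico (k+2) m, Fp m (σ * τ) j = S := by
      refine Finset.prod_congr rfl fun j hj => ?_
      obtain ⟨hj1, -⟩ := Finset.mem_Ico.mp hj
      rw [Fp, Fp, hswap j (by omega) (by omega), hswap (j+1) (by omega) (by omega)]
    have hDτ : Dp m τ = P * ((pv - MvPolynomial.X a) * ((MvPolynomial.X a - MvPolynomial.X b)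
        * ((MvPolynomial.X b - qv) * S))) := by
      rw [Dp, prod_split_three (Fp m τ) k m hk1 hkm, hFkm, hFk, hFk1]
    have hDστ : Dp m (σ * τ) = P * ((pv - MvPolynomial.X b)
        * ((MvPolynomial.X b - MvPolynomial.X a) * ((MvPolynomial.X a - qv) * S))) := by
      rw [Dp, prod_split_three (Fp m (σ * τ)) k m hk1 hkm, hFkm', hFk', hFk1', hP', hS']
    have hevP : ev m a b P ≠ 0 := by
      rw [hP, map_prod]
      refine Finset.prod_ne_zero_iff.mpr fun j hj => ?_
      obtain ⟨-, hj2⟩ := Finset.mem_Ico.mp hj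
      exact ev_Fp_ne' a b hab τ k hkm hτk hτk1 j (by omega) (by omega) (by omega)
    have hevS : ev m a b S ≠ 0 := by
      rw [hS, map_prod]
      refine Finset.prod_ne_zero_iff.mpr fun j hj => ?_
      obtain ⟨hj1, hj2⟩ := Finset.mem_Ico.mp hj
      exact ev_Fp_ne' a b hab τ k hkm hτk hτk1 j hj2 (by omega) (by omega)
    have hpvc : pv = MvPolynomial.X (τ ⟨k-1, by omega⟩) := vp_lt τ (k-1) (by omega)
    have hca : τ ⟨k-1, by omega⟩ ≠ a := apply_ne τ (by omega) (by omega) (by omega) hτk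
    have hcb : τ ⟨k-1, by omega⟩ ≠ b := apply_ne τ (by omega) hkm (by omega) hτk1
    have hev_pv_a : ev m a b (pv - MvPolynomial.X a) ≠ 0 := by
      rw [hpvc]
      refine ev_X_sub_X_ne hab hca ?_ ?_
      · rintro ⟨h, -⟩; exact hca h
      · rintro ⟨h, -⟩; exact hcb h
    have hev_pv_b : ev m a b (pv - MvPolynomial.X b) ≠ 0 := by
      rw [hpvc]
      refine ev_X_sub_X_ne hab hcb ?_ ?_
      · rintro ⟨h, -⟩; exact hca h
      · rintro ⟨h, -⟩; exact hcb h
    refine ⟨pv - qv, P * (S * ((pv - MvPolynomial.X a) * ((MvPolynomial.X b - qv)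
      * ((pv - MvPolynomial.X b) * (MvPolynomial.X a - qv))))), ?_, ?_⟩
    · rw [map_mul, map_mul, map_mul, map_mul, map_mul]
      exact mul_ne_zero hevP (mul_ne_zero hevS (mul_ne_zero hev_pv_a
        (mul_ne_zero hev_b_qv (mul_ne_zero hev_pv_b hev_qv_a))))
    · have hQev : ev m a b (P * (S * ((pv - MvPolynomial.X a) * ((MvPolynomial.X b - qv)
          * ((pv - MvPolynomial.X b) * (MvPolynomial.X a - qv)))))) ≠ 0 := by
        rw [map_mul, map_mul, map_mul, map_mul, map_mul]
        exact mul_ne_zero hevP (mul_ne_zero hevS (mul_ne_zero hev_pv_a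
          (mul_ne_zero hev_b_qv (mul_ne_zero hev_pv_b hev_qv_a))))
      have hQ0 : (P * (S * ((pv - MvPolynomial.X a) * ((MvPolynomial.X b - qv)
          * ((pv - MvPolynomial.X b) * (MvPolynomial.X a - qv)))))) ≠ 0 := by
        intro h; apply hQev; rw [h, map_zero]
      refine pair_inv ?_ ?_ ?_ ?_
      · exact (map_ne_zero_iff _ (IsFractionRing.injective (PolyW m) (RatW m))).mpr (Dp_ne_zero τ)
      · exact (map_ne_zero_iff _ (IsFractionRing.injective (PolyW m) (RatW m))).mpr
          (Dp_ne_zero (σ * τ))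
      · exact (map_ne_zero_iff _ (IsFractionRing.injective (PolyW m) (RatW m))).mpr hQ0
      · rw [← map_add, ← map_mul, ← map_mul, ← map_mul]
        congr 1
        rw [hDτ, hDστ]; ring

end S14

theorem stmt14_aux {A : Type*} [Ring A] [Algebra ℂ A] (m : ℕ) (hm : 2 ≤ m)
    (x : Fin m → A) (a b : Fin m) (hab : a ≠ b) (hcomm : x a * x b = x b * x a) :
    (∑ τ : Equiv.Perm (Fin m),
      (List.ofFn fun j : Fin m => x (τ j)).prod ⊗ₜ[ℂ] (betheDenom m hm τ)⁻¹) ∈ Submodule.span ℂ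
      {t : A ⊗[ℂ] RatW m | ∃ (u : A) (f : RatW m),
        (∃ p q : PolyW m, ¬ (MvPolynomial.X a - MvPolynomial.X b ∣ q) ∧
          f = algebraMap (PolyW m) (RatW m) p / algebraMap (PolyW m) (RatW m) q) ∧
        t = u ⊗ₜ[ℂ] f} := by
  classical
  set Gen : Set (A ⊗[ℂ] RatW m) :=
    {t : A ⊗[ℂ] RatW m | ∃ (u : A) (f : RatW m),
        (∃ p q : PolyW m, ¬ (MvPolynomial.X a - MvPolynomial.X b ∣ q) ∧
          f = algebraMap (PolyW m) (RatW m) p / algebraMap (PolyW m) (RatW m) q) ∧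
        t = u ⊗ₜ[ℂ] f} with hGen
  set T : Equiv.Perm (Fin m) → A ⊗[ℂ] RatW m :=
    fun τ => (List.ofFn fun j : Fin m => x (τ j)).prod ⊗ₜ[ℂ] (betheDenom m hm τ)⁻¹ with hT
  have hgen : ∀ (u : A) (Np Qp : PolyW m), S14.ev m a b Qp ≠ 0 →
      ∀ f : RatW m, f = algebraMap (PolyW m) (RatW m) Np / algebraMap (PolyW m) (RatW m) Qp →
      u ⊗ₜ[ℂ] f ∈ Submodule.span ℂ Gen := fun u Np Qp hQ f hf =>
    Submodule.subset_span ⟨u, f, ⟨Np, Qp, S14.not_dvd_of_ev_ne a b Qp hQ, hf⟩, rfl⟩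
  set σ : Equiv.Perm (Fin m) := Equiv.swap a b with hσ
  set AdjAB : Equiv.Perm (Fin m) → Prop :=
    fun τ => ((τ.symm b : Fin m) : ℕ) = ((τ.symm a : Fin m) : ℕ) + 1 with hAdjAB
  set AdjBA : Equiv.Perm (Fin m) → Prop :=
    fun τ => ((τ.symm a : Fin m) : ℕ) = ((τ.symm b : Fin m) : ℕ) + 1 with hAdjBA
  -- the sum splits into three parts
  have hsplit : ∑ τ : Equiv.Perm (Fin m), T τ
      = (∑ τ ∈ Finset.univ.filter (fun τ => ¬ (AdjAB τ ∨ AdjBA τ)), T τ)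
        + ((∑ τ ∈ Finset.univ.filter AdjAB, T τ)
          + (∑ τ ∈ Finset.univ.filter AdjBA, T τ)) := by
    rw [← Finset.sum_filter_add_sum_filter_not Finset.univ AdjAB T,
      ← Finset.sum_filter_add_sum_filter_not (Finset.univ.filter (fun τ => ¬ AdjAB τ)) AdjBA T,
      Finset.filter_filter, Finset.filter_filter]
    have e1 : Finset.univ.filter (fun τ : Equiv.Perm (Fin m) => ¬AdjAB τ ∧ AdjBA τ)
        = Finset.univ.filter AdjBA := by
      refine Finset.filter_congr fun τ _ => ?_
      simp only [hAdjAB, hAdjBA]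
      constructor
      · rintro ⟨-, h⟩; exact h
      · intro h; exact ⟨by omega, h⟩
    have e2 : Finset.univ.filter (fun τ : Equiv.Perm (Fin m) => ¬AdjAB τ ∧ ¬AdjBA τ)
        = Finset.univ.filter (fun τ => ¬ (AdjAB τ ∨ AdjBA τ)) := by
      refine Finset.filter_congr fun τ _ => ?_
      tauto
    rw [e1, e2]
    abel
  rw [hsplit]
  refine Submodule.add_mem _ ?_ ?_
  · -- non-adjacent permutations: each term is individually regular
    refine Submodule.sum_mem _ fun τ hτ => ?_
    have hna : ¬ (AdjAB τ ∨ AdjBA τ) := (Finset.mem_filter.mp hτ).2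
    have hev : S14.ev m a b (S14.Dp m τ) ≠ 0 := by
      rw [S14.Dp, map_prod]
      refine Finset.prod_ne_zero_iff.mpr fun j hj => ?_
      have hjm : j < m := Finset.mem_range.mp hj
      refine S14.ev_Fp_ne a b hab τ j hjm fun hj1 => ⟨?_, ?_⟩
      · rintro ⟨h1, h2⟩
        refine hna (Or.inl ?_)
        have ea : τ.symm a = ⟨j, hjm⟩ := by rw [← h1, Equiv.symm_apply_apply]
        have eb : τ.symm b = ⟨j+1, hj1⟩ := by rw [← h2, Equiv.symm_apply_apply]
        simp [hAdjAB, ea, eb]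
      · rintro ⟨h1, h2⟩
        refine hna (Or.inr ?_)
        have ea : τ.symm a = ⟨j+1, hj1⟩ := by rw [← h2, Equiv.symm_apply_apply]
        have eb : τ.symm b = ⟨j, hjm⟩ := by rw [← h1, Equiv.symm_apply_apply]
        simp [hAdjBA, ea, eb]
    have hbd : (betheDenom m hm τ)⁻¹
        = algebraMap (PolyW m) (RatW m) 1 / algebraMap (PolyW m) (RatW m) (S14.Dp m τ) := by
      rw [S14.betheDenom_eq hm τ, map_one, one_div]
    exact hgen _ 1 (S14.Dp m τ) hev _ hbd
  · -- adjacent permutations: pair τ with σ * τ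
    have key_b : ∀ τ : Equiv.Perm (Fin m), (σ * τ).symm b = τ.symm a := by
      intro τ
      rw [Equiv.symm_apply_eq]
      show b = σ (τ (τ.symm a))
      rw [Equiv.apply_symm_apply, hσ, Equiv.swap_apply_left]
    have key_a : ∀ τ : Equiv.Perm (Fin m), (σ * τ).symm a = τ.symm b := by
      intro τ
      rw [Equiv.symm_apply_eq]
      show a = σ (τ (τ.symm b))
      rw [Equiv.apply_symm_apply, hσ, Equiv.swap_apply_right]
    have hinv : ∀ τ : Equiv.Perm (Fin m), σ * (σ * τ) = τ := by
      intro τ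
      rw [← mul_assoc, hσ, Equiv.swap_mul_self, one_mul]
    have hBA : ∑ τ ∈ Finset.univ.filter AdjBA, T τ
        = ∑ τ ∈ Finset.univ.filter AdjAB, T (σ * τ) := by
      refine Finset.sum_bij' (fun τ _ => σ * τ) (fun τ _ => σ * τ) ?_ ?_ ?_ ?_ ?_
      · intro τ hτ
        have h := (Finset.mem_filter.mp hτ).2
        simp only [hAdjBA] at h
        refine Finset.mem_filter.mpr ⟨Finset.mem_univ _, ?_⟩
        simp only [hAdjAB, key_a, key_b]
        exact h
      · intro τ hτ
        have h := (Finset.mem_filter.mp hτ).2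
        simp only [hAdjAB] at h
        refine Finset.mem_filter.mpr ⟨Finset.mem_univ _, ?_⟩
        simp only [hAdjBA, key_a, key_b]
        exact h
      · intro τ _; exact hinv τ
      · intro τ _; exact hinv τ
      · intro τ _; rw [hinv τ]
    rw [hBA, ← Finset.sum_add_distrib]
    refine Submodule.sum_mem _ fun τ hτ => ?_
    have hadj : ((τ.symm b : Fin m) : ℕ) = ((τ.symm a : Fin m) : ℕ) + 1 :=
      (Finset.mem_filter.mp hτ).2
    set k : ℕ := ((τ.symm a : Fin m) : ℕ) with hk
    have hkm : k + 1 < m := by rw [← hadj]; exact (τ.symm b).isLt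
    have hτk : τ ⟨k, by omega⟩ = a := by
      have : (⟨k, by omega⟩ : Fin m) = τ.symm a := by ext; rfl
      rw [this, Equiv.apply_symm_apply]
    have hτk1 : τ ⟨k+1, hkm⟩ = b := by
      have : (⟨k+1, hkm⟩ : Fin m) = τ.symm b := by ext; exact hadj.symm
      rw [this, Equiv.apply_symm_apply]
    have hστk : (σ * τ) ⟨k, by omega⟩ = b := by
      show σ (τ _) = b
      rw [hτk, hσ, Equiv.swap_apply_left]
    have hστk1 : (σ * τ) ⟨k+1, hkm⟩ = a := by
      show σ (τ _) = a
      rw [hτk1, hσ, Equiv.swap_apply_right]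
    -- the two x-products agree
    have hx : (List.ofFn fun j : Fin m => x ((σ * τ) j)).prod
        = (List.ofFn fun j : Fin m => x (τ j)).prod := by
      refine S14.ofFn_prod_swap k m _ _ hkm ?_ ?_
      · intro i hi1 hi2
        have h1 : τ i ≠ a := by
          intro he
          apply hi1
          have : i = τ.symm a := by rw [← he, Equiv.symm_apply_apply]
          rw [this]
        have h2 : τ i ≠ b := by
          intro he
          apply hi2
          have : i = τ.symm b := by rw [← he, Equiv.symm_apply_apply]
          rw [this, hadj]
        show x (σ (τ i)) = x (τ i)
        rw [hσ, Equiv.swap_apply_of_ne_of_ne h1 h2]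
      · show x ((σ * τ) ⟨k, _⟩) * x ((σ * τ) ⟨k+1, _⟩) = x (τ ⟨k, _⟩) * x (τ ⟨k+1, _⟩)
        rw [hστk, hστk1, hτk, hτk1]
        exact hcomm.symm
    obtain ⟨N, Q, hQ, heq⟩ := S14.pair_good a b hab τ k hkm hτk hτk1
    have hTT : T τ + T (σ * τ)
        = ((List.ofFn fun j : Fin m => x (τ j)).prod) ⊗ₜ[ℂ]
            ((algebraMap (PolyW m) (RatW m) (S14.Dp m τ))⁻¹
              + (algebraMap (PolyW m) (RatW m) (S14.Dp m (σ * τ)))⁻¹) := by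
      rw [hT]
      simp only []
      rw [hx, S14.betheDenom_eq hm τ, S14.betheDenom_eq hm (σ * τ), TensorProduct.tmul_add]
    rw [hTT]
    exact hgen _ N Q hQ _ heq


/-- If `x_a` and `x_b` commute (`a ≠ b`), then the universal Bethe vector
`Φ` has no pole along the hyperplane `w_a = w_b`: it lies in `A ⊗ 𝒪`, where `𝒪` is the
subring of rational functions expressible with denominator not divisible by `w_a − w_b`. -/
theorem stmt14 {A : Type*} [Ring A] [Algebra ℂ A] (m : ℕ) (hm : 2 ≤ m)
    (x : Fin m → A) (a b : Fin m) (hab : a ≠ b) (hcomm : x a * x b = x b * x a) :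
    bethePhi m hm x ∈ Submodule.span ℂ
      {t : A ⊗[ℂ] RatW m | ∃ (u : A) (f : RatW m),
        (∃ p q : PolyW m, ¬ (MvPolynomial.X a - MvPolynomial.X b ∣ q) ∧
          f = algebraMap (PolyW m) (RatW m) p / algebraMap (PolyW m) (RatW m) q) ∧
        t = u ⊗ₜ[ℂ] f} := by
  unfold bethePhi
  exact stmt14_aux m hm x a b hab hcomm
end
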